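/- arXiv:2203.16701 — 8 statements merged into one kernel-verified Lean document; each statement's English description precedes it below -/
import Mathlib

section
/- Let X, Y, W be finite nonempty sets, let n be a positive integer, let P be a probability mass function on X × Y, let the dataset S = ((X_1,Y_1),...,(X_n,Y_n)) consist of n independent samples from P, and let A be a randomized algorithm mapping each dataset in (X × Y)^n to a probability mass function A(S) on W; let the random variable W be drawn from A(S). Suppose A is ε-selectively differentially private over the x-component, i.e., for every pair of datasets S, S' ∈ (X × Y)^n that agree in all coordinates except possibly the x-component of a single sample (the index and the y-component of that sample being equal), and for every w ∈ W, one has A(S)(w) ≤ e^ε · A(S')(w). Then for every index i, the conditional mutual information satisfies I(W ; X_i | Y_i) ≤ ε, where the mutual information is computed with respect to the joint distribution of (X_i, Y_i, W). -/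
open scoped BigOperators

/-- Mutual information `I(A;B)` of a (joint) probability mass function `p` on `A × B`,
with natural logarithm and the convention `0 · log 0 = 0` (automatic since
`Real.log 0 = 0` in Mathlib). -/
noncomputable def mutualInfo {A B : Type*} [Fintype A] [Fintype B]
    (p : A → B → ℝ) : ℝ :=
  ∑ a, ∑ b,
    p a b * Real.log (p a b / ((∑ b', p a b') * (∑ a', p a' b)))

/-- Conditional mutual information `I(A;B|C)` of a (joint) probability mass
function `p` on `A × B × C`:
`I(A;B|C) = ∑ p(a,b,c) log ( p(a,b,c) p(c) / (p(a,c) p(b,c)) )`. -/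
noncomputable def condMutualInfo {A B C : Type*} [Fintype A] [Fintype B] [Fintype C]
    (p : A → B → C → ℝ) : ℝ :=
  ∑ a, ∑ b, ∑ c,
    p a b c * Real.log ((p a b c * (∑ a', ∑ b', p a' b' c)) /
      ((∑ b', p a b' c) * (∑ a', p a' b c)))

/-!
The joint law of `(W, X_i, Y_i)` factors as `P (x, y) * K (x, y) w`, where
`K z = condOutputLaw P A i z` is the law of the output when the `i`-th sample is pinned to `z`
and the others are drawn i.i.d. from `P`. Selective privacy survives this averaging, so
`K (x, y) w ≤ exp ε * K (x', y) w` for all `x, x'`. The conditional law of `W` given `Y_i = y`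
is a mixture of the `K (x', y)`, hence every log-ratio `log (K (x, y) w / p (w | y))` in
`I(W; X_i | Y_i)` is at most `ε`.
-/

open Real Finset

theorem Real.log_div_le_of_le_exp_mul {b c ε : ℝ} (hb : 0 < b) (hc : 0 < c)
    (h : b ≤ exp ε * c) : log (b / c) ≤ ε := by
  rw [log_le_iff_le_exp (div_pos hb hc), div_le_iff₀ hc]
  linarith

section ChannelBound

variable {W X Y : Type*} [Fintype W] [Fintype X] [Fintype Y]

theorem condMutualInfo_le_of_forall_le_exp_mul (μ : X × Y → ℝ) (K : X × Y → W → ℝ) (ε : ℝ)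
    (hμ0 : ∀ z, 0 ≤ μ z) (hμ1 : ∑ z, μ z = 1) (hK0 : ∀ z w, 0 ≤ K z w)
    (hK1 : ∀ z, ∑ w, K z w = 1) (hK : ∀ x x' y w, K (x, y) w ≤ exp ε * K (x', y) w) :
    condMutualInfo (fun w x y => μ (x, y) * K (x, y) w) ≤ ε := by
  have hmarg : ∀ x y, ∑ w, μ (x, y) * K (x, y) w = μ (x, y) := fun x y => by
    rw [← mul_sum, hK1, mul_one]
  have hmargY : ∀ y, ∑ w, ∑ x, μ (x, y) * K (x, y) w = ∑ x, μ (x, y) := fun y => by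
    rw [sum_comm]; simp only [hmarg]
  have hterm : ∀ w x y, μ (x, y) * K (x, y) w *
      log (μ (x, y) * K (x, y) w * (∑ x', μ (x', y)) /
        ((∑ x', μ (x', y) * K (x', y) w) * μ (x, y))) ≤ ε * (μ (x, y) * K (x, y) w) := by
    intro w x y
    rcases (mul_nonneg (hμ0 (x, y)) (hK0 (x, y) w)).eq_or_lt with hzero | hpos
    · simp [← hzero]
    have hμ : 0 < μ (x, y) := (hμ0 _).lt_of_ne' (left_ne_zero_of_mul hpos.ne')
    rw [mul_comm ε]
    refine mul_le_mul_of_nonneg_left (log_div_le_of_le_exp_mul ?_ ?_ ?_) hpos.le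
    · exact mul_pos hpos (hμ.trans_le (single_le_sum (fun x' _ => hμ0 (x', y)) (mem_univ x)))
    · exact mul_pos (hpos.trans_le (single_le_sum (f := fun x' => μ (x', y) * K (x', y) w)
        (fun x' _ => mul_nonneg (hμ0 _) (hK0 _ _)) (mem_univ x))) hμ
    · rw [mul_sum, sum_mul, mul_sum]
      refine sum_le_sum fun x' _ => ?_
      calc μ (x, y) * K (x, y) w * μ (x', y) = μ (x, y) * μ (x', y) * K (x, y) w := by ring
        _ ≤ μ (x, y) * μ (x', y) * (exp ε * K (x', y) w) :=
          mul_le_mul_of_nonneg_left (hK x x' y w) (mul_nonneg (hμ0 _) (hμ0 _))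
        _ = exp ε * (μ (x', y) * K (x', y) w * μ (x, y)) := by ring
  have htotal : ∑ w, ∑ x, ∑ y, μ (x, y) * K (x, y) w = 1 := by
    rw [sum_comm, ← hμ1, Fintype.sum_prod_type]
    refine sum_congr rfl fun x _ => ?_
    rw [sum_comm]
    simp only [hmarg]
  unfold condMutualInfo
  simp only [hmarg, hmargY]
  calc _ ≤ ∑ w, ∑ x, ∑ y, ε * (μ (x, y) * K (x, y) w) :=
        sum_le_sum fun w _ => sum_le_sum fun x _ => sum_le_sum fun y _ => hterm w x y
    _ = ε := by
        simp only [← mul_sum, htotal, mul_one]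

end ChannelBound

section SplitAt

variable {ι α M : Type*} [Fintype ι] [DecidableEq ι]

theorem Fintype.sum_ite_apply_eq_funSplitAt [Fintype α] [DecidableEq α] [AddCommMonoid M]
    (f : (ι → α) → M) (i : ι) (a : α) :
    ∑ S, (if S i = a then f S else 0) =
      ∑ T : {j // j ≠ i} → α, f ((Equiv.funSplitAt i α).symm (a, T)) := by
  rw [← (Equiv.funSplitAt i α).symm.sum_comp, Fintype.sum_prod_type]
  simp [Equiv.funSplitAt_symm_apply]

theorem Fintype.prod_funSplitAt_symm_apply [CommMonoid M] (f : α → M) (i : ι) (a : α)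
    (T : {j // j ≠ i} → α) :
    ∏ j, f ((Equiv.funSplitAt i α).symm (a, T) j) = f a * ∏ j, f (T j) := by
  rw [Fintype.prod_eq_mul_prod_subtype_ne _ i]
  simp only [Equiv.funSplitAt_symm_apply, dite_true]
  congr 1
  exact Finset.prod_congr rfl fun j _ => by rw [dif_neg j.2]

end SplitAt

section SelectivePrivacy

variable {ι X Y W : Type*} [Fintype ι] [DecidableEq ι] [Fintype X] [Fintype Y]

def SelectivelyPrivateOverX (A : (ι → X × Y) → W → ℝ) (ε : ℝ) : Prop :=
  ∀ S S' : ι → X × Y, ∀ i : ι, (∀ j, j ≠ i → S j = S' j) → (S i).2 = (S' i).2 →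
    ∀ w, A S w ≤ exp ε * A S' w

noncomputable def condOutputLaw (P : X × Y → ℝ) (A : (ι → X × Y) → W → ℝ) (i : ι) (z : X × Y)
    (w : W) : ℝ :=
  ∑ T : {j // j ≠ i} → X × Y, (∏ j, P (T j)) * A ((Equiv.funSplitAt i _).symm (z, T)) w

variable (P : X × Y → ℝ) (A : (ι → X × Y) → W → ℝ) (i : ι)

theorem sum_ite_apply_eq_mul_condOutputLaw [DecidableEq X] [DecidableEq Y] (z : X × Y) (w : W) :
    ∑ S : ι → X × Y, (if S i = z then (∏ j, P (S j)) * A S w else 0) =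
      P z * condOutputLaw P A i z w := by
  rw [Fintype.sum_ite_apply_eq_funSplitAt (fun S => (∏ j, P (S j)) * A S w),
    condOutputLaw, mul_sum]
  simp only [Fintype.prod_funSplitAt_symm_apply, mul_assoc]

theorem condOutputLaw_nonneg (hP0 : ∀ z, 0 ≤ P z) (hA0 : ∀ S w, 0 ≤ A S w) (z : X × Y) (w : W) :
    0 ≤ condOutputLaw P A i z w :=
  sum_nonneg fun _ _ => mul_nonneg (prod_nonneg fun _ _ => hP0 _) (hA0 _ _)

theorem sum_condOutputLaw [Fintype W] (hP1 : ∑ z, P z = 1) (hA1 : ∀ S, ∑ w, A S w = 1)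
    (z : X × Y) : ∑ w, condOutputLaw P A i z w = 1 := by
  simp only [condOutputLaw]
  rw [sum_comm]
  simp only [← mul_sum, hA1, mul_one]
  rw [← Fintype.prod_sum]
  simp [hP1]

theorem condOutputLaw_le_exp_mul {ε : ℝ} (hP0 : ∀ z, 0 ≤ P z) (hA : SelectivelyPrivateOverX A ε)
    (x x' : X) (y : Y) (w : W) :
    condOutputLaw P A i (x, y) w ≤ exp ε * condOutputLaw P A i (x', y) w := by
  rw [condOutputLaw, condOutputLaw, mul_sum]
  refine sum_le_sum fun T _ => ?_
  rw [mul_left_comm]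
  refine mul_le_mul_of_nonneg_left (hA _ _ i (fun j hj => ?_) ?_ w)
    (prod_nonneg fun _ _ => hP0 _)
  · simp [Equiv.funSplitAt_symm_apply, hj]
  · simp [Equiv.funSplitAt_symm_apply]

end SelectivePrivacy

theorem sdp_over_x_bounds_memorization_general
    {X Y W : Type*} [Fintype X] [Fintype Y] [Fintype W]
    [DecidableEq X] [DecidableEq Y]
    (n : ℕ)
    (P : X × Y → ℝ) (hP0 : ∀ z, 0 ≤ P z) (hP1 : ∑ z, P z = 1)
    (A : (Fin n → X × Y) → W → ℝ)
    (hA0 : ∀ S w, 0 ≤ A S w) (hA1 : ∀ S, ∑ w, A S w = 1)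
    (ε : ℝ)
    (hsDP : ∀ S S' : Fin n → X × Y, ∀ i : Fin n,
      (∀ j, j ≠ i → S j = S' j) → (S i).2 = (S' i).2 →
      ∀ w, A S w ≤ Real.exp ε * A S' w)
    (i : Fin n) :
    condMutualInfo
      (fun (w : W) (x : X) (y : Y) =>
        ∑ S : Fin n → X × Y,
          if S i = (x, y) then (∏ j, P (S j)) * A S w else 0) ≤ ε := by
  simp only [sum_ite_apply_eq_mul_condOutputLaw]
  exact condMutualInfo_le_of_forall_le_exp_mul P (condOutputLaw P A i) ε hP0 hP1
    (condOutputLaw_nonneg P A i hP0 hA0) (sum_condOutputLaw P A i hP1 hA1)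
    (condOutputLaw_le_exp_mul P A i hP0 hsDP)

/-- If the randomized training algorithm `A` is ε-selectively
differentially private over the `x`-component, then for every index `i`,
`I(W ; X_i | Y_i) ≤ ε`, where the information quantities are computed with respect
to the joint law of `(X_i, Y_i, W)` induced by `n` i.i.d. samples from `P` and
`W ~ A(S)`. -/
theorem sdp_over_x_bounds_memorization
    {X Y W : Type*} [Fintype X] [Fintype Y] [Fintype W]
    [Nonempty X] [Nonempty Y] [Nonempty W]
    [DecidableEq X] [DecidableEq Y]
    (n : ℕ) (hn : 0 < n)
    (P : X × Y → ℝ) (hP0 : ∀ z, 0 ≤ P z) (hP1 : ∑ z, P z = 1)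
    (A : (Fin n → X × Y) → W → ℝ)
    (hA0 : ∀ S w, 0 ≤ A S w) (hA1 : ∀ S, ∑ w, A S w = 1)
    (ε : ℝ)
    (hsDP : ∀ S S' : Fin n → X × Y, ∀ i : Fin n,
      (∀ j, j ≠ i → S j = S' j) → (S i).2 = (S' i).2 →
      ∀ w, A S w ≤ Real.exp ε * A S' w)
    (i : Fin n) :
    condMutualInfo
      (fun (w : W) (x : X) (y : Y) =>
        ∑ S : Fin n → X × Y,
          if S i = (x, y) then (∏ j, P (S j)) * A S w else 0) ≤ ε :=
  sdp_over_x_bounds_memorization_general n P hP0 hP1 A hA0 hA1 ε hsDP i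
end

section
/- Let X, Y, W be finite nonempty sets, let n be a positive integer, let P be a probability mass function on X × Y, let the dataset S = ((X_1,Y_1),...,(X_n,Y_n)) consist of n independent samples from P, and let A be a randomized algorithm mapping each dataset in (X × Y)^n to a probability mass function A(S) on W; let W be drawn from A(S). Suppose A is ε-differentially private, i.e., for every pair of datasets S, S' ∈ (X × Y)^n that differ in at most one sample (one coordinate), and for every w ∈ W, one has A(S)(w) ≤ e^ε · A(S')(w). Then for every index i, the conditional mutual information satisfies I(W ; X_i | Y_i) ≤ ε. -/
open scoped BigOperators

/-- If the randomized training algorithm `A` is ε-differentially private, then for every index `i`,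
`I(W ; X_i | Y_i) ≤ ε`, where the information quantities are computed with respect
to the joint law of `(X_i, Y_i, W)` induced by `n` i.i.d. samples from `P` and
`W ~ A(S)`. -/
theorem dp_bounds_memorization
    {X Y W : Type*} [Fintype X] [Fintype Y] [Fintype W]
    [Nonempty X] [Nonempty Y] [Nonempty W]
    [DecidableEq X] [DecidableEq Y]
    (n : ℕ) (hn : 0 < n)
    (P : X × Y → ℝ) (hP0 : ∀ z, 0 ≤ P z) (hP1 : ∑ z, P z = 1)
    (A : (Fin n → X × Y) → W → ℝ)
    (hA0 : ∀ S w, 0 ≤ A S w) (hA1 : ∀ S, ∑ w, A S w = 1)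
    (ε : ℝ)
    (hDP : ∀ S S' : Fin n → X × Y, ∀ i : Fin n,
      (∀ j, j ≠ i → S j = S' j) →
      ∀ w, A S w ≤ Real.exp ε * A S' w)
    (i : Fin n) :
    condMutualInfo
      (fun (w : W) (x : X) (y : Y) =>
        ∑ S : Fin n → X × Y,
          if S i = (x, y) then (∏ j, P (S j)) * A S w else 0) ≤ ε := by
  classical
  set σ : X × Y → ({ j : Fin n // j ≠ i } → X × Y) → (Fin n → X × Y) :=
    fun z T => (Equiv.funSplitAt i (X × Y)).symm (z, T) with hσdef
  have hσi : ∀ z T, σ z T i = z := by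
    intro z T; simp [hσdef, Equiv.funSplitAt_symm_apply]
  have hσj : ∀ z T (j : Fin n) (h : j ≠ i), σ z T j = T ⟨j, h⟩ := by
    intro z T j h; simp [hσdef, Equiv.funSplitAt_symm_apply, h]
  -- sum splitting
  have hsplit : ∀ (z : X × Y) (F : (Fin n → X × Y) → ℝ),
      (∑ S : Fin n → X × Y, if S i = z then F S else 0)
        = ∑ T : { j : Fin n // j ≠ i } → X × Y, F (σ z T) := by
    intro z F
    rw [← Equiv.sum_comp (Equiv.funSplitAt i (X × Y)).symm
      (fun S => if S i = z then F S else 0)]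
    rw [Fintype.sum_prod_type]
    have : ∀ z' : X × Y,
        (∑ T : { j : Fin n // j ≠ i } → X × Y,
          if ((Equiv.funSplitAt i (X × Y)).symm (z', T)) i = z
          then F ((Equiv.funSplitAt i (X × Y)).symm (z', T)) else 0)
        = if z' = z then ∑ T, F (σ z' T) else 0 := by
      intro z'
      by_cases h : z' = z <;>
        simp [h, hσdef, Equiv.funSplitAt_symm_apply, Finset.sum_ite_eq]
    rw [Finset.sum_congr rfl fun z' _ => this z']
    simp
  -- product splitting
  have hprod : ∀ (z : X × Y) (T : { j : Fin n // j ≠ i } → X × Y),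
      (∏ j, P (σ z T j)) = P z * ∏ j : { j : Fin n // j ≠ i }, P (T j) := by
    intro z T
    rw [Fintype.prod_eq_mul_prod_compl i (fun j => P (σ z T j)), hσi]
    congr 1
    rw [Finset.prod_subtype (p := fun j : Fin n => j ≠ i) ({i}ᶜ : Finset (Fin n))
      (fun j => by simp) (fun j => P (σ z T j))]
    exact Finset.prod_congr rfl fun j _ => by rw [hσj z T j j.2, Subtype.coe_eta]
  set q : (X × Y) → W → ℝ :=
    fun z w => ∑ T : { j : Fin n // j ≠ i } → X × Y,
      (∏ j : { j : Fin n // j ≠ i }, P (T j)) * A (σ z T) w with hqdef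
  set p : W → X → Y → ℝ := fun w x y =>
    ∑ S : Fin n → X × Y, if S i = (x, y) then (∏ j, P (S j)) * A S w else 0 with hpdef
  have hpq : ∀ w x y, p w x y = P (x, y) * q (x, y) w := by
    intro w x y
    rw [hpdef]
    simp only
    rw [hsplit (x, y) (fun S => (∏ j, P (S j)) * A S w)]
    rw [hqdef, Finset.mul_sum]
    exact Finset.sum_congr rfl fun T _ => by rw [hprod]; ring
  have hq0 : ∀ z w, 0 ≤ q z w := by
    intro z w
    exact Finset.sum_nonneg fun T _ =>
      mul_nonneg (Finset.prod_nonneg fun j _ => hP0 _) (hA0 _ _)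
  have hp0 : ∀ w x y, 0 ≤ p w x y := fun w x y => by
    rw [hpq]; exact mul_nonneg (hP0 _) (hq0 _ _)
  have hTsum : (∑ T : { j : Fin n // j ≠ i } → X × Y,
      ∏ j : { j : Fin n // j ≠ i }, P (T j)) = 1 := by
    rw [← Fintype.prod_sum (fun (_ : { j : Fin n // j ≠ i }) (z : X × Y) => P z)]
    simp [hP1]
  have hqsum : ∀ z, ∑ w, q z w = 1 := by
    intro z
    rw [hqdef]
    simp only
    rw [Finset.sum_comm]
    calc (∑ T : { j : Fin n // j ≠ i } → X × Y,
          ∑ w, (∏ j : { j : Fin n // j ≠ i }, P (T j)) * A (σ z T) w)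
        = ∑ T : { j : Fin n // j ≠ i } → X × Y,
          (∏ j : { j : Fin n // j ≠ i }, P (T j)) := by
          refine Finset.sum_congr rfl fun T _ => ?_
          rw [← Finset.mul_sum, hA1, mul_one]
      _ = 1 := hTsum
  have hqDP : ∀ z z' w, q z w ≤ Real.exp ε * q z' w := by
    intro z z' w
    rw [hqdef]
    simp only
    rw [Finset.mul_sum]
    refine Finset.sum_le_sum fun T _ => ?_
    have h := hDP (σ z T) (σ z' T) i
      (fun j hj => by rw [hσj z T j hj, hσj z' T j hj]) w
    calc (∏ j : { j : Fin n // j ≠ i }, P (T j)) * A (σ z T) w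
        ≤ (∏ j : { j : Fin n // j ≠ i }, P (T j)) * (Real.exp ε * A (σ z' T) w) :=
          mul_le_mul_of_nonneg_left h (Finset.prod_nonneg fun j _ => hP0 _)
      _ = Real.exp ε * ((∏ j : { j : Fin n // j ≠ i }, P (T j)) * A (σ z' T) w) := by ring
  -- marginals
  have hb : ∀ x y, (∑ w, p w x y) = P (x, y) := by
    intro x y
    simp only [hpq, ← Finset.mul_sum, hqsum, mul_one]
  -- total mass
  have htotal : (∑ w, ∑ x, ∑ y, p w x y) = 1 := by
    have : ∀ x y, (∑ w, p w x y) = P (x, y) := hb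
    calc (∑ w, ∑ x, ∑ y, p w x y) = ∑ x, ∑ y, ∑ w, p w x y := by
          rw [Finset.sum_comm]
          exact Finset.sum_congr rfl fun x _ => Finset.sum_comm
      _ = ∑ x, ∑ y, P (x, y) := by
          exact Finset.sum_congr rfl fun x _ => Finset.sum_congr rfl fun y _ => hb x y
      _ = 1 := by rw [← Fintype.sum_prod_type]; exact hP1
  -- pointwise bound
  have hpt : ∀ w x y,
      p w x y * Real.log ((p w x y * (∑ w', ∑ x', p w' x' y)) /
        ((∑ x', p w x' y) * (∑ w', p w' x y))) ≤ p w x y * ε := by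
    intro w x y
    rcases eq_or_lt_of_le (hp0 w x y) with h0 | hpos
    · rw [← h0]; simp
    · have hb' : (∑ w', p w' x y) = P (x, y) := hb x y
      have hPxy : 0 < P (x, y) := by
        by_contra h
        push_neg at h
        have : P (x, y) = 0 := le_antisymm h (hP0 _)
        rw [hpq, this, zero_mul] at hpos
        exact lt_irrefl 0 hpos
      have hqpos : 0 < q (x, y) w := by
        by_contra h
        push_neg at h
        have : q (x, y) w = 0 := le_antisymm h (hq0 _ _)
        rw [hpq, this, mul_zero] at hpos
        exact lt_irrefl 0 hpos
      have ha_pos : 0 < ∑ x', p w x' y := by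
        refine lt_of_lt_of_le hpos ?_
        exact Finset.single_le_sum (fun x' _ => hp0 w x' y) (Finset.mem_univ x)
      have hc_pos : 0 < ∑ w', ∑ x', p w' x' y := by
        refine lt_of_lt_of_le hpos ?_
        calc p w x y ≤ ∑ x', p w x' y :=
              Finset.single_le_sum (fun x' _ => hp0 w x' y) (Finset.mem_univ x)
          _ ≤ ∑ w', ∑ x', p w' x' y :=
              Finset.single_le_sum (fun w' _ =>
                Finset.sum_nonneg fun x' _ => hp0 w' x' y) (Finset.mem_univ w)
      -- key inequality
      have hkey : p w x y * (∑ w', ∑ x', p w' x' y)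
          ≤ Real.exp ε * ((∑ x', p w x' y) * (∑ w', p w' x y)) := by
        have hcy : (∑ w', ∑ x', p w' x' y) = ∑ x', P (x', y) := by
          rw [Finset.sum_comm]
          exact Finset.sum_congr rfl fun x' _ => hb x' y
        rw [hcy, hb', hpq]
        have : ∀ x' : X, P (x, y) * q (x, y) w * P (x', y)
            ≤ Real.exp ε * (P (x', y) * q (x', y) w) * P (x, y) := by
          intro x'
          have h1 : q (x, y) w ≤ Real.exp ε * q (x', y) w := hqDP (x, y) (x', y) w
          calc P (x, y) * q (x, y) w * P (x', y)
              ≤ P (x, y) * (Real.exp ε * q (x', y) w) * P (x', y) := by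
                refine mul_le_mul_of_nonneg_right (mul_le_mul_of_nonneg_left h1 (hP0 _)) (hP0 _)
            _ = Real.exp ε * (P (x', y) * q (x', y) w) * P (x, y) := by ring
        calc P (x, y) * q (x, y) w * (∑ x', P (x', y))
            = ∑ x', P (x, y) * q (x, y) w * P (x', y) := by rw [Finset.mul_sum]
          _ ≤ ∑ x', Real.exp ε * (P (x', y) * q (x', y) w) * P (x, y) :=
              Finset.sum_le_sum fun x' _ => this x'
          _ = Real.exp ε * ((∑ x', P (x', y) * q (x', y) w) * P (x, y)) := by
              rw [← Finset.sum_mul, ← Finset.mul_sum, mul_assoc]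
          _ = Real.exp ε * ((∑ x', p w x' y) * P (x, y)) := by
              congr 2
              exact (Finset.sum_congr rfl fun x' _ => (hpq w x' y).symm)
      have hden_pos : 0 < (∑ x', p w x' y) * (∑ w', p w' x y) := by
        rw [hb']; exact mul_pos ha_pos hPxy
      have hnum_pos : 0 < p w x y * (∑ w', ∑ x', p w' x' y) := mul_pos hpos hc_pos
      have harg_pos : 0 < (p w x y * (∑ w', ∑ x', p w' x' y)) /
          ((∑ x', p w x' y) * (∑ w', p w' x y)) := div_pos hnum_pos hden_pos
      have hlog : Real.log ((p w x y * (∑ w', ∑ x', p w' x' y)) /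
          ((∑ x', p w x' y) * (∑ w', p w' x y))) ≤ ε := by
        rw [Real.log_le_iff_le_exp harg_pos]
        rw [div_le_iff₀ hden_pos]
        calc p w x y * (∑ w', ∑ x', p w' x' y)
            ≤ Real.exp ε * ((∑ x', p w x' y) * (∑ w', p w' x y)) := hkey
          _ = Real.exp ε * ((∑ x', p w x' y) * (∑ w', p w' x y)) := rfl
      exact mul_le_mul_of_nonneg_left hlog (le_of_lt hpos)
  -- conclude
  unfold condMutualInfo
  calc (∑ w, ∑ x, ∑ y, p w x y * Real.log ((p w x y * (∑ w', ∑ x', p w' x' y)) /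
        ((∑ x', p w x' y) * (∑ w', p w' x y))))
      ≤ ∑ w, ∑ x, ∑ y, p w x y * ε := by
        refine Finset.sum_le_sum fun w _ => Finset.sum_le_sum fun x _ =>
          Finset.sum_le_sum fun y _ => hpt w x y
    _ = (∑ w, ∑ x, ∑ y, p w x y) * ε := by
        rw [Finset.sum_mul]
        refine Finset.sum_congr rfl fun w _ => ?_
        rw [Finset.sum_mul]
        refine Finset.sum_congr rfl fun x _ => (Finset.sum_mul _ _ _).symm
    _ = ε := by rw [htotal, one_mul]
end

section
/- Let X, Y, W be finite nonempty sets, let n be a positive integer, let P be a probability mass function on X × Y, let the dataset S = ((X_1,Y_1),...,(X_n,Y_n)) consist of n independent samples from P, and let A be a randomized algorithm mapping each dataset in (X × Y)^n to a probability mass function A(S) on W; let W be drawn from A(S). Suppose A is ε-selectively differentially private over the y-component, i.e., for every pair of datasets S, S' ∈ (X × Y)^n that agree in all coordinates except possibly the y-component of a single sample (the index and the x-component of that sample being equal), and for every w ∈ W, one has A(S)(w) ≤ e^ε · A(S')(w). Then for every index i, the Relational Memorization satisfies mem^r_W(X_i, Y_i) = I(X_i ; Y_i | W) − I(X_i ;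 Y_i) ≤ ε. -/
open scoped BigOperators

lemma gibbs_aux {ι : Type*} [Fintype ι] (a b : ι → ℝ)
    (ha : ∀ t, 0 ≤ a t) (hb : ∀ t, 0 ≤ b t) (hab : ∀ t, b t = 0 → a t = 0) :
    (∑ t, a t) - (∑ t, b t) ≤ ∑ t, a t * Real.log (a t / b t) := by
  rw [← Finset.sum_sub_distrib]
  apply Finset.sum_le_sum
  intro t _
  rcases (ha t).eq_or_lt with h | h
  · rw [← h]
    simp only [zero_mul, zero_sub, neg_nonpos]
    exact hb t
  · have hbt : 0 < b t := lt_of_le_of_ne (hb t) (fun h0 => by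
      have := hab t h0.symm
      rw [this] at h; exact lt_irrefl 0 h)
    have h1 : Real.log (b t / a t) ≤ b t / a t - 1 :=
      Real.log_le_sub_one_of_pos (div_pos hbt h)
    have h2 : a t * Real.log (a t / b t) = -(a t * Real.log (b t / a t)) := by
      rw [show a t / b t = (b t / a t)⁻¹ by rw [inv_div], Real.log_inv]; ring
    have h3 : a t * (b t / a t) = b t := by field_simp
    have h4 := mul_le_mul_of_nonneg_left h1 h.le
    rw [mul_sub, h3, mul_one] at h4
    linarith

lemma sum3_comm {α β γ M : Type*} [Fintype α] [Fintype β] [Fintype γ] [AddCommMonoid M]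
    (f : α → β → γ → M) :
    ∑ a, ∑ b, ∑ c, f a b c = ∑ b, ∑ c, ∑ a, f a b c := by
  rw [Finset.sum_comm]
  exact Finset.sum_congr rfl fun b _ => Finset.sum_comm

lemma mi_diff_le {X Y W : Type*} [Fintype X] [Fintype Y] [Fintype W]
    (ε : ℝ) (hε : 0 ≤ ε)
    (p : X → Y → W → ℝ) (h0 : ∀ x y w, 0 ≤ p x y w)
    (hTot : ∑ x, ∑ y, ∑ w, p x y w = 1)
    (hDP : ∀ x y w,
      p x y w * (∑ y', ∑ w', p x y' w') ≤
        Real.exp ε * ((∑ y', p x y' w) * (∑ w', p x y w'))) :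
    condMutualInfo p - mutualInfo (fun x y => ∑ w, p x y w) ≤ ε := by
  -- positivity of marginals
  have hQ : ∀ x y w, 0 < p x y w → 0 < ∑ w', p x y w' := fun x y w hp =>
    hp.trans_le (Finset.single_le_sum (fun w' _ => h0 x y w') (Finset.mem_univ w))
  have hQX : ∀ x y w, 0 < p x y w → 0 < ∑ y', ∑ w', p x y' w' := fun x y w hp =>
    (hQ x y w hp).trans_le
      (Finset.single_le_sum (f := fun y' => ∑ w', p x y' w')
        (fun y' _ => Finset.sum_nonneg fun w' _ => h0 x y' w') (Finset.mem_univ y))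
  have hQY : ∀ x y w, 0 < p x y w → 0 < ∑ x', ∑ w', p x' y w' := fun x y w hp =>
    (hQ x y w hp).trans_le
      (Finset.single_le_sum (f := fun x' => ∑ w', p x' y w')
        (fun x' _ => Finset.sum_nonneg fun w' _ => h0 x' y w') (Finset.mem_univ x))
  have hXW : ∀ x y w, 0 < p x y w → 0 < ∑ y', p x y' w := fun x y w hp =>
    hp.trans_le (Finset.single_le_sum (fun y' _ => h0 x y' w) (Finset.mem_univ y))
  have hYW : ∀ x y w, 0 < p x y w → 0 < ∑ x', p x' y w := fun x y w hp =>
    hp.trans_le (Finset.single_le_sum (fun x' _ => h0 x' y w) (Finset.mem_univ x))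
  have hW : ∀ x y w, 0 < p x y w → 0 < ∑ x', ∑ y', p x' y' w := fun x y w hp =>
    (hYW x y w hp).trans_le
      (Finset.sum_le_sum fun x' _ =>
        Finset.single_le_sum (fun y' _ => h0 x' y' w) (Finset.mem_univ y))
  -- pointwise regrouping identity
  have hstep : ∀ x y w,
      p x y w * Real.log ((p x y w * (∑ x', ∑ y', p x' y' w)) /
          ((∑ y', p x y' w) * (∑ x', p x' y w)))
        - p x y w * Real.log ((∑ w', p x y w') /
          ((∑ y', ∑ w', p x y' w') * (∑ x', ∑ w', p x' y w')))
      = p x y w * Real.log ((p x y w * (∑ y', ∑ w', p x y' w')) /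
          ((∑ y', p x y' w) * (∑ w', p x y w')))
        - p x y w * Real.log ((∑ x', p x' y w) /
          ((∑ x', ∑ y', p x' y' w) * (∑ x', ∑ w', p x' y w'))) := by
    intro x y w
    rcases (h0 x y w).eq_or_lt with h | hp
    · rw [← h]; simp
    · have h1 := hQ x y w hp
      have h2 := hQX x y w hp
      have h3 := hQY x y w hp
      have h4 := hXW x y w hp
      have h5 := hYW x y w hp
      have h6 := hW x y w hp
      rw [Real.log_div (mul_pos hp h6).ne' (mul_pos h4 h5).ne',
        Real.log_mul hp.ne' h6.ne', Real.log_mul h4.ne' h5.ne',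
        Real.log_div h1.ne' (mul_pos h2 h3).ne', Real.log_mul h2.ne' h3.ne',
        Real.log_div (mul_pos hp h2).ne' (mul_pos h4 h1).ne',
        Real.log_mul hp.ne' h2.ne', Real.log_mul h4.ne' h1.ne',
        Real.log_div h5.ne' (mul_pos h6 h3).ne', Real.log_mul h6.ne' h3.ne']
      ring
  -- first summand bounded by ε
  have hT1 : ∑ x, ∑ y, ∑ w, p x y w * Real.log ((p x y w * (∑ y', ∑ w', p x y' w')) /
      ((∑ y', p x y' w) * (∑ w', p x y w'))) ≤ ε := by
    calc ∑ x, ∑ y, ∑ w, p x y w * Real.log ((p x y w * (∑ y', ∑ w', p x y' w')) /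
          ((∑ y', p x y' w) * (∑ w', p x y w')))
        ≤ ∑ x, ∑ y, ∑ w, p x y w * ε := by
          refine Finset.sum_le_sum fun x _ => Finset.sum_le_sum fun y _ =>
            Finset.sum_le_sum fun w _ => ?_
          rcases (h0 x y w).eq_or_lt with h | hp
          · rw [← h]; simp
          · refine mul_le_mul_of_nonneg_left ?_ (h0 x y w)
            have h1 := hQ x y w hp
            have h2 := hQX x y w hp
            have h4 := hXW x y w hp
            rw [Real.log_le_iff_le_exp (div_pos (mul_pos hp h2) (mul_pos h4 h1))]
            rw [div_le_iff₀ (mul_pos h4 h1)]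
            exact hDP x y w
      _ = (∑ x, ∑ y, ∑ w, p x y w) * ε := by simp only [← Finset.sum_mul]
      _ = ε := by rw [hTot, one_mul]
  -- total-sum reorderings
  have ha1 : ∑ t : Y × W, (∑ x', p x' t.1 t.2) = 1 := by
    calc ∑ t : Y × W, (∑ x', p x' t.1 t.2)
        = ∑ y, ∑ w, ∑ x', p x' y w := Fintype.sum_prod_type _
      _ = ∑ x, ∑ y, ∑ w, p x y w := (sum3_comm _).symm
      _ = 1 := hTot
  have hWsum : ∑ w, ∑ x', ∑ y', p x' y' w = 1 := by
    calc ∑ w, ∑ x', ∑ y', p x' y' w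
        = ∑ y, ∑ w, ∑ x, p x y w := (sum3_comm _).symm
      _ = ∑ x, ∑ y, ∑ w, p x y w := (sum3_comm _).symm
      _ = 1 := hTot
  have hYsum : ∑ y, ∑ x', ∑ w', p x' y w' = 1 := by
    calc ∑ y, ∑ x', ∑ w', p x' y w'
        = ∑ x, ∑ y, ∑ w', p x y w' := Finset.sum_comm
      _ = 1 := hTot
  have hb1 : ∑ t : Y × W, ((∑ x', ∑ y', p x' y' t.2) * (∑ x', ∑ w', p x' t.1 w')) = 1 := by
    calc ∑ t : Y × W, ((∑ x', ∑ y', p x' y' t.2) * (∑ x', ∑ w', p x' t.1 w'))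
        = ∑ y, ∑ w, (∑ x', ∑ y', p x' y' w) * (∑ x', ∑ w', p x' y w') :=
          Fintype.sum_prod_type _
      _ = ∑ y, (∑ w, ∑ x', ∑ y', p x' y' w) * (∑ x', ∑ w', p x' y w') :=
          Finset.sum_congr rfl fun y _ => (Finset.sum_mul _ _ _).symm
      _ = ∑ y, ∑ x', ∑ w', p x' y w' := by rw [hWsum]; simp
      _ = 1 := hYsum
  -- second summand nonnegative (Gibbs)
  have habs : ∀ t : Y × W,
      (∑ x', ∑ y', p x' y' t.2) * (∑ x', ∑ w', p x' t.1 w') = 0 →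
      (∑ x', p x' t.1 t.2) = 0 := by
    rintro ⟨y, w⟩ hzero
    rcases mul_eq_zero.mp hzero with hz | hz
    · refine le_antisymm ?_ (Finset.sum_nonneg fun x' _ => h0 x' y w)
      calc ∑ x', p x' y w ≤ ∑ x', ∑ y', p x' y' w :=
            Finset.sum_le_sum fun x' _ =>
              Finset.single_le_sum (fun y' _ => h0 x' y' w) (Finset.mem_univ y)
        _ = 0 := hz
    · refine le_antisymm ?_ (Finset.sum_nonneg fun x' _ => h0 x' y w)
      calc ∑ x', p x' y w ≤ ∑ x', ∑ w', p x' y w' :=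
            Finset.sum_le_sum fun x' _ =>
              Finset.single_le_sum (fun w' _ => h0 x' y w') (Finset.mem_univ w)
        _ = 0 := hz
  have hT2 : 0 ≤ ∑ x, ∑ y, ∑ w, p x y w * Real.log ((∑ x', p x' y w) /
      ((∑ x', ∑ y', p x' y' w) * (∑ x', ∑ w', p x' y w'))) := by
    have hg := gibbs_aux (fun t : Y × W => ∑ x', p x' t.1 t.2)
      (fun t : Y × W => (∑ x', ∑ y', p x' y' t.2) * (∑ x', ∑ w', p x' t.1 w'))
      (fun t => Finset.sum_nonneg fun x' _ => h0 x' t.1 t.2)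
      (fun t => mul_nonneg
        (Finset.sum_nonneg fun x' _ => Finset.sum_nonneg fun y' _ => h0 x' y' t.2)
        (Finset.sum_nonneg fun x' _ => Finset.sum_nonneg fun w' _ => h0 x' t.1 w'))
      habs
    rw [ha1, hb1, sub_self] at hg
    calc (0:ℝ) ≤ ∑ t : Y × W, (∑ x', p x' t.1 t.2) * Real.log ((∑ x', p x' t.1 t.2) /
          ((∑ x', ∑ y', p x' y' t.2) * (∑ x', ∑ w', p x' t.1 w'))) := hg
      _ = ∑ y, ∑ w, (∑ x', p x' y w) * Real.log ((∑ x', p x' y w) /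
          ((∑ x', ∑ y', p x' y' w) * (∑ x', ∑ w', p x' y w'))) := Fintype.sum_prod_type _
      _ = ∑ y, ∑ w, ∑ x, p x y w * Real.log ((∑ x', p x' y w) /
          ((∑ x', ∑ y', p x' y' w) * (∑ x', ∑ w', p x' y w'))) :=
          Finset.sum_congr rfl fun y _ => Finset.sum_congr rfl fun w _ =>
            Finset.sum_mul _ _ _
      _ = ∑ x, ∑ y, ∑ w, p x y w * Real.log ((∑ x', p x' y w) /
          ((∑ x', ∑ y', p x' y' w) * (∑ x', ∑ w', p x' y w'))) := (sum3_comm _).symm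
  -- assemble
  simp only [condMutualInfo, mutualInfo]
  calc (∑ x, ∑ y, ∑ w, p x y w * Real.log ((p x y w * (∑ x', ∑ y', p x' y' w)) /
          ((∑ y', p x y' w) * (∑ x', p x' y w))))
        - ∑ x, ∑ y, (∑ w, p x y w) * Real.log ((∑ w, p x y w) /
          ((∑ y', ∑ w, p x y' w) * (∑ x', ∑ w, p x' y w)))
      = ∑ x, ∑ y, ∑ w,
          (p x y w * Real.log ((p x y w * (∑ x', ∑ y', p x' y' w)) /
            ((∑ y', p x y' w) * (∑ x', p x' y w)))
          - p x y w * Real.log ((∑ w', p x y w') /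
            ((∑ y', ∑ w', p x y' w') * (∑ x', ∑ w', p x' y w')))) := by
        rw [← Finset.sum_sub_distrib]
        refine Finset.sum_congr rfl fun x _ => ?_
        rw [← Finset.sum_sub_distrib]
        refine Finset.sum_congr rfl fun y _ => ?_
        rw [Finset.sum_mul, ← Finset.sum_sub_distrib]
    _ = ∑ x, ∑ y, ∑ w,
          (p x y w * Real.log ((p x y w * (∑ y', ∑ w', p x y' w')) /
            ((∑ y', p x y' w) * (∑ w', p x y w')))
          - p x y w * Real.log ((∑ x', p x' y w) /
            ((∑ x', ∑ y', p x' y' w) * (∑ x', ∑ w', p x' y w')))) :=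
        Finset.sum_congr rfl fun x _ => Finset.sum_congr rfl fun y _ =>
          Finset.sum_congr rfl fun w _ => hstep x y w
    _ = (∑ x, ∑ y, ∑ w, p x y w * Real.log ((p x y w * (∑ y', ∑ w', p x y' w')) /
            ((∑ y', p x y' w) * (∑ w', p x y w'))))
        - ∑ x, ∑ y, ∑ w, p x y w * Real.log ((∑ x', p x' y w) /
            ((∑ x', ∑ y', p x' y' w) * (∑ x', ∑ w', p x' y w'))) := by
        simp only [Finset.sum_sub_distrib]
    _ ≤ ε := by linarith

/-- If the randomized training algorithm `A` is ε-selectively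
differentially private over the `y`-component, then for every index `i`, the
Relational Memorization satisfies
`mem^r_W(X_i, Y_i) = I(X_i ; Y_i | W) − I(X_i ; Y_i) ≤ ε`, where the information
quantities are computed with respect to the joint law of `(X_i, Y_i, W)` induced
by `n` i.i.d. samples from `P` and `W ~ A(S)`. -/
theorem sdp_over_y_bounds_relational_memorization
    {X Y W : Type*} [Fintype X] [Fintype Y] [Fintype W]
    [Nonempty X] [Nonempty Y] [Nonempty W]
    [DecidableEq X] [DecidableEq Y]
    (n : ℕ) (hn : 0 < n)
    (P : X × Y → ℝ) (hP0 : ∀ z, 0 ≤ P z) (hP1 : ∑ z, P z = 1)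
    (A : (Fin n → X × Y) → W → ℝ)
    (hA0 : ∀ S w, 0 ≤ A S w) (hA1 : ∀ S, ∑ w, A S w = 1)
    (ε : ℝ)
    (hsDP : ∀ S S' : Fin n → X × Y, ∀ i : Fin n,
      (∀ j, j ≠ i → S j = S' j) → (S i).1 = (S' i).1 →
      ∀ w, A S w ≤ Real.exp ε * A S' w)
    (i : Fin n) :
    condMutualInfo
      (fun (x : X) (y : Y) (w : W) =>
        ∑ S : Fin n → X × Y,
          if S i = (x, y) then (∏ j, P (S j)) * A S w else 0)
    - mutualInfo
      (fun (x : X) (y : Y) =>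
        ∑ w : W, ∑ S : Fin n → X × Y,
          if S i = (x, y) then (∏ j, P (S j)) * A S w else 0) ≤ ε := by

  -- basic nonnegativity
  have hπ : ∀ g : Fin n → X × Y, 0 ≤ ∏ j, P (g j) :=
    fun g => Finset.prod_nonneg fun j _ => hP0 _
  -- ε is nonnegative
  have hε : 0 ≤ ε := by
    set S₀ : Fin n → X × Y := fun _ => Classical.arbitrary _ with hS₀
    have hex : ∃ w, 0 < A S₀ w := by
      by_contra hc
      push_neg at hc
      have hz : ∑ w, A S₀ w = 0 :=
        Finset.sum_eq_zero fun w _ => le_antisymm (hc w) (hA0 S₀ w)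
      rw [hA1] at hz; norm_num at hz
    obtain ⟨w₀, hw₀⟩ := hex
    have h := hsDP S₀ S₀ i (fun _ _ => rfl) rfl w₀
    have h1 : (1:ℝ) ≤ Real.exp ε := by nlinarith
    exact Real.one_le_exp_iff.mp h1
  -- marginalizing out w
  have hq : ∀ x y, (∑ w, ∑ S : Fin n → X × Y,
      if S i = (x, y) then (∏ j, P (S j)) * A S w else 0)
      = ∑ S : Fin n → X × Y, if S i = (x, y) then (∏ j, P (S j)) else 0 := by
    intro x y
    rw [Finset.sum_comm]
    refine Finset.sum_congr rfl fun S _ => ?_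
    by_cases h : S i = (x, y)
    · simp only [if_pos h, ← Finset.mul_sum, hA1, mul_one]
    · simp [h]
  -- total mass of product measure
  have h1S : ∑ S : Fin n → X × Y, ∏ j, P (S j) = 1 := by
    rw [← Fintype.sum_pow, hP1, one_pow]
  -- total mass
  have hTot : ∑ x, ∑ y, ∑ w, (∑ S : Fin n → X × Y,
      if S i = (x, y) then (∏ j, P (S j)) * A S w else 0) = 1 := by
    calc ∑ x, ∑ y, ∑ w, (∑ S : Fin n → X × Y,
          if S i = (x, y) then (∏ j, P (S j)) * A S w else 0)
        = ∑ x, ∑ y, ∑ S : Fin n → X × Y,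
            if S i = (x, y) then (∏ j, P (S j)) else 0 :=
          Finset.sum_congr rfl fun x _ => Finset.sum_congr rfl fun y _ => hq x y
      _ = ∑ z : X × Y, ∑ S : Fin n → X × Y,
            if S i = z then (∏ j, P (S j)) else 0 :=
          (Fintype.sum_prod_type (f := fun z : X × Y => ∑ S : Fin n → X × Y,
            if S i = z then (∏ j, P (S j)) else 0)).symm
      _ = ∑ S : Fin n → X × Y, ∑ z : X × Y,
            if S i = z then (∏ j, P (S j)) else 0 := Finset.sum_comm
      _ = ∑ S : Fin n → X × Y, ∏ j, P (S j) :=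
          Finset.sum_congr rfl fun S _ => by simp
      _ = 1 := h1S
  -- key pairwise DP inequality
  have hupd : ∀ (g : Fin n → X × Y) (a : X × Y),
      (∏ j, P (Function.update g i a j)) = P a * ∏ j ∈ Finset.univ \ {i}, P (g j) := by
    intro g a
    rw [← Finset.prod_update_of_mem (Finset.mem_univ i) (fun k => P (g k)) (P a)]
    exact Finset.prod_congr rfl fun j _ => Function.apply_update (fun _ z => P z) g i a j
  have hsplit : ∀ g : Fin n → X × Y,
      (∏ j, P (g j)) = P (g i) * ∏ j ∈ Finset.univ \ {i}, P (g j) := by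
    intro g
    rw [← Finset.mul_prod_erase Finset.univ (fun j => P (g j)) (Finset.mem_univ i),
      Finset.erase_eq]
  have hσ : Function.Involutive (fun T : (Fin n → X × Y) × (Fin n → X × Y) =>
      (Function.update T.2 i (T.1 i), Function.update T.1 i (T.2 i))) := by
    rintro ⟨S, S'⟩
    simp [Function.update_idem, Function.update_eq_self]
  have key : ∀ x y y' w,
      (∑ S : Fin n → X × Y, if S i = (x, y) then (∏ j, P (S j)) * A S w else 0) *
        (∑ S : Fin n → X × Y, if S i = (x, y') then (∏ j, P (S j)) else 0)
      ≤ Real.exp ε *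
        ((∑ S : Fin n → X × Y, if S i = (x, y') then (∏ j, P (S j)) * A S w else 0) *
         (∑ S : Fin n → X × Y, if S i = (x, y) then (∏ j, P (S j)) else 0)) := by
    intro x y y' w
    calc (∑ S : Fin n → X × Y, if S i = (x, y) then (∏ j, P (S j)) * A S w else 0) *
          (∑ S : Fin n → X × Y, if S i = (x, y') then (∏ j, P (S j)) else 0)
        = ∑ T : (Fin n → X × Y) × (Fin n → X × Y),
            (if T.1 i = (x, y) then (∏ j, P (T.1 j)) * A T.1 w else 0) *
            (if T.2 i = (x, y') then (∏ j, P (T.2 j)) else 0) := by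
          rw [Fintype.sum_mul_sum]
          exact (Fintype.sum_prod_type (f := fun T : (Fin n → X × Y) × (Fin n → X × Y) =>
            (if T.1 i = (x, y) then (∏ j, P (T.1 j)) * A T.1 w else 0) *
            (if T.2 i = (x, y') then (∏ j, P (T.2 j)) else 0))).symm
      _ = ∑ T : (Fin n → X × Y) × (Fin n → X × Y),
            (if Function.update T.2 i (T.1 i) i = (x, y) then
              (∏ j, P (Function.update T.2 i (T.1 i) j)) * A (Function.update T.2 i (T.1 i)) w
              else 0) *
            (if Function.update T.1 i (T.2 i) i = (x, y') then
              (∏ j, P (Function.update T.1 i (T.2 i) j)) else 0) :=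
          (Fintype.sum_equiv (hσ.toPerm _) _ _ (fun T => rfl)).symm
      _ ≤ ∑ T : (Fin n → X × Y) × (Fin n → X × Y),
            Real.exp ε * ((if T.1 i = (x, y) then (∏ j, P (T.1 j)) else 0) *
              (if T.2 i = (x, y') then (∏ j, P (T.2 j)) * A T.2 w else 0)) := by
          refine Finset.sum_le_sum ?_
          rintro ⟨S, S'⟩ -
          simp only [Function.update_self]
          by_cases h1 : S i = (x, y)
          · by_cases h2 : S' i = (x, y')
            · simp only [if_pos h1, if_pos h2]
              have hR : 0 ≤ ∏ j ∈ Finset.univ \ {i}, P (S j) :=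
                Finset.prod_nonneg fun j _ => hP0 _
              have hR' : 0 ≤ ∏ j ∈ Finset.univ \ {i}, P (S' j) :=
                Finset.prod_nonneg fun j _ => hP0 _
              have hA' : A (Function.update S' i (S i)) w ≤ Real.exp ε * A S' w := by
                refine hsDP _ S' i (fun j hj => Function.update_of_ne hj _ _) ?_ w
                rw [Function.update_self, h1, h2]
              calc ((∏ j, P (Function.update S' i (S i) j)) * A (Function.update S' i (S i)) w) *
                    (∏ j, P (Function.update S i (S' i) j))
                  = (P (S i) * (∏ j ∈ Finset.univ \ {i}, P (S' j)) *
                      (P (S' i) * ∏ j ∈ Finset.univ \ {i}, P (S j))) *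
                      A (Function.update S' i (S i)) w := by
                    rw [hupd S' (S i), hupd S (S' i)]; ring
                _ ≤ (P (S i) * (∏ j ∈ Finset.univ \ {i}, P (S' j)) *
                      (P (S' i) * ∏ j ∈ Finset.univ \ {i}, P (S j))) *
                      (Real.exp ε * A S' w) := by
                    refine mul_le_mul_of_nonneg_left hA' ?_
                    exact mul_nonneg (mul_nonneg (hP0 _) hR') (mul_nonneg (hP0 _) hR)
                _ = Real.exp ε * ((∏ j, P (S j)) * ((∏ j, P (S' j)) * A S' w)) := by
                    rw [hsplit S, hsplit S']; ring
            · simp [h2]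
          · simp [h1]
      _ = Real.exp ε * ((∑ S : Fin n → X × Y, if S i = (x, y) then (∏ j, P (S j)) else 0) *
            (∑ S : Fin n → X × Y, if S i = (x, y') then (∏ j, P (S j)) * A S w else 0)) := by
          rw [← Finset.mul_sum]
          congr 1
          rw [Fintype.sum_mul_sum]
          exact Fintype.sum_prod_type (f := fun T : (Fin n → X × Y) × (Fin n → X × Y) =>
            (if T.1 i = (x, y) then (∏ j, P (T.1 j)) else 0) *
            (if T.2 i = (x, y') then (∏ j, P (T.2 j)) * A T.2 w else 0))
      _ = Real.exp ε *
            ((∑ S : Fin n → X × Y, if S i = (x, y') then (∏ j, P (S j)) * A S w else 0) *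
             (∑ S : Fin n → X × Y, if S i = (x, y) then (∏ j, P (S j)) else 0)) := by ring
  have h0 : ∀ x y w, 0 ≤ ∑ S : Fin n → X × Y,
      if S i = (x, y) then (∏ j, P (S j)) * A S w else 0 := by
    intro x y w
    refine Finset.sum_nonneg fun S _ => ?_
    by_cases h : S i = (x, y)
    · simp only [if_pos h]; exact mul_nonneg (hπ S) (hA0 S w)
    · simp [h]
  have hDP : ∀ x y w,
      (∑ S : Fin n → X × Y, if S i = (x, y) then (∏ j, P (S j)) * A S w else 0) *
        (∑ y', ∑ w', ∑ S : Fin n → X × Y,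
          if S i = (x, y') then (∏ j, P (S j)) * A S w' else 0)
      ≤ Real.exp ε *
        ((∑ y', ∑ S : Fin n → X × Y,
            if S i = (x, y') then (∏ j, P (S j)) * A S w else 0) *
         (∑ w', ∑ S : Fin n → X × Y,
            if S i = (x, y) then (∏ j, P (S j)) * A S w' else 0)) := by
    intro x y w
    rw [show (∑ y', ∑ w', ∑ S : Fin n → X × Y,
        if S i = (x, y') then (∏ j, P (S j)) * A S w' else 0)
        = ∑ y', ∑ S : Fin n → X × Y, if S i = (x, y') then (∏ j, P (S j)) else 0 from
      Finset.sum_congr rfl fun y' _ => hq x y', hq x y]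
    calc (∑ S : Fin n → X × Y, if S i = (x, y) then (∏ j, P (S j)) * A S w else 0) *
          (∑ y', ∑ S : Fin n → X × Y, if S i = (x, y') then (∏ j, P (S j)) else 0)
        = ∑ y', (∑ S : Fin n → X × Y, if S i = (x, y) then (∏ j, P (S j)) * A S w else 0) *
            (∑ S : Fin n → X × Y, if S i = (x, y') then (∏ j, P (S j)) else 0) :=
          Finset.mul_sum _ _ _
      _ ≤ ∑ y', Real.exp ε *
            ((∑ S : Fin n → X × Y, if S i = (x, y') then (∏ j, P (S j)) * A S w else 0) *
             (∑ S : Fin n → X × Y, if S i = (x, y) then (∏ j, P (S j)) else 0)) :=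
          Finset.sum_le_sum fun y' _ => key x y y' w
      _ = Real.exp ε *
            ((∑ y', ∑ S : Fin n → X × Y,
                if S i = (x, y') then (∏ j, P (S j)) * A S w else 0) *
             (∑ S : Fin n → X × Y, if S i = (x, y) then (∏ j, P (S j)) else 0)) := by
          rw [← Finset.mul_sum, ← Finset.sum_mul]
  exact mi_diff_le ε hε _ h0 hTot hDP
end

section
/- Let X, Y, W be finite nonempty sets and let K be a Markov kernel assigning to each pair (x,y) ∈ X × Y a probability mass function K(x,y)(·) on W. Suppose K is factorized, i.e., there exist functions r : W × X → ℝ and s : W × Y → ℝ such that K(x,y)(w) = r(w,x) · s(w,y) for all (x,y,w). Then for every joint probability mass function P on X × Y, letting (X, Y) ~ P and W be drawn from K(X,Y), the Relational Memorization is nonpositive: I(X ; Y | W) − I(X ; Y) ≤ 0. -/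
open scoped BigOperators

/-! For a factorized kernel the log-ratio
`p(x,y,w) p(w) p(x) p(y) / (p(x,w) p(y,w) p(x,y))` only sees `K(x,y)(w) = r(w,x) s(w,y)`, and it
splits into a factor depending on `(x, w)` and one depending on `(y, w)`. Let `p'` be the law of
`(X, Y, W)` when `X` and `Y` are drawn independently from their marginals. Then
`I(X;Y|W) - I(X;Y) = -D(p_{XW} ‖ a) - D(p_{YW} ‖ p'_{YW})` with `a(x,w) = p(w) p'(x | w)`, and
since `a` has mass at most one, Gibbs' inequality `p log (q / p) ≤ q - p` makes both terms
nonpositive. -/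

open Finset Real

theorem mul_log_div_le_sub {p q : ℝ} (hp : 0 ≤ p) (hq : 0 ≤ q) (hqp : 0 < p → 0 < q) :
    p * log (q / p) ≤ q - p := by
  rcases hp.eq_or_lt with rfl | hp
  · simpa using hq
  calc p * log (q / p) ≤ p * (q / p - 1) :=
        mul_le_mul_of_nonneg_left (log_le_sub_one_of_pos (div_pos (hqp hp) hp)) hp.le
    _ = q - p := by field_simp

theorem log_div_sub_log_div_eq {P r s pX pY pXW pYW pW u : ℝ} (hP : 0 < P) (hr : 0 < r)
    (hs : 0 < s) (hpX : 0 < pX) (hpY : 0 < pY) (hpXW : 0 < pXW) (hpYW : 0 < pYW) (hpW : 0 < pW)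
    (hu : 0 < u) :
    log (P * (r * s) * pW / (pXW * pYW)) - log (P / (pX * pY)) =
      log (pW * (pX * r) / u / pXW) + log (pY * s * u / pYW) := by
  rw [← log_div (by positivity) (by positivity), ← log_mul (by positivity) (by positivity)]
  congr 1
  field_simp

theorem exists_pos_of_sum_pos {ι : Type*} [Fintype ι] {f : ι → ℝ} (h : 0 < ∑ i, f i) :
    ∃ i, 0 < f i := by
  obtain ⟨i, -, hi⟩ := exists_lt_of_sum_lt (f := fun _ => (0 : ℝ)) (by simpa using h)
  exact ⟨i, hi⟩

namespace FactorizedKernel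

variable {X Y W : Type*} (P : X → Y → ℝ) (r : W → X → ℝ) (s : W → Y → ℝ)

def law (x : X) (y : Y) (w : W) : ℝ := P x y * (r w x * s w y)

def margX [Fintype Y] (x : X) : ℝ := ∑ y, P x y

def margY [Fintype X] (y : Y) : ℝ := ∑ x, P x y

def margXW [Fintype Y] (x : X) (w : W) : ℝ := ∑ y, law P r s x y w

def margYW [Fintype X] (y : Y) (w : W) : ℝ := ∑ x, law P r s x y w

def margW [Fintype X] [Fintype Y] (w : W) : ℝ := ∑ x, ∑ y, law P r s x y w

def weightX [Fintype X] [Fintype Y] (w : W) : ℝ := ∑ x, margX P x * r w x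

/-- `margW w` times the conditional law of `X` given `W = w` when `X` and `Y` are drawn
independently from their marginals. -/
noncomputable def tiltedXW [Fintype X] [Fintype Y] (x : X) (w : W) : ℝ :=
  margW P r s w * (margX P x * r w x) / weightX P r w

/-- The law of `(Y, W)` when `X` and `Y` are drawn independently from their marginals. -/
def indepYW [Fintype X] [Fintype Y] (y : Y) (w : W) : ℝ := margY P y * s w y * weightX P r w

variable {P r s}

theorem law_nonneg (hP : ∀ x y, 0 ≤ P x y) (hr : ∀ w x, 0 ≤ r w x)
    (hs : ∀ w y, 0 ≤ s w y) (x : X) (y : Y) (w : W) : 0 ≤ law P r s x y w :=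
  mul_nonneg (hP x y) (mul_nonneg (hr w x) (hs w y))

theorem pos_of_law_pos (hP : ∀ x y, 0 ≤ P x y) (hr : ∀ w x, 0 ≤ r w x)
    (hs : ∀ w y, 0 ≤ s w y) {x : X} {y : Y} {w : W} (h : 0 < law P r s x y w) :
    0 < P x y ∧ 0 < r w x ∧ 0 < s w y := by
  obtain ⟨hPxy, hrwx, hswy⟩ : P x y ≠ 0 ∧ r w x ≠ 0 ∧ s w y ≠ 0 := by
    simpa only [law, ne_eq, mul_eq_zero, not_or] using h.ne'
  exact ⟨(hP x y).lt_of_ne' hPxy, (hr w x).lt_of_ne' hrwx, (hs w y).lt_of_ne' hswy⟩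

theorem sum_law [Fintype W] (hK : ∀ x y, ∑ w, r w x * s w y = 1) (x : X) (y : Y) :
    ∑ w, law P r s x y w = P x y := by
  simp only [law, ← mul_sum, hK, mul_one]

theorem margX_pos [Fintype Y] (hP : ∀ x y, 0 ≤ P x y) {x : X} {y : Y} (h : 0 < P x y) :
    0 < margX P x :=
  sum_pos' (fun y' _ => hP x y') ⟨y, mem_univ y, h⟩

theorem margY_pos [Fintype X] (hP : ∀ x y, 0 ≤ P x y) {x : X} {y : Y} (h : 0 < P x y) :
    0 < margY P y :=
  sum_pos' (fun x' _ => hP x' y) ⟨x, mem_univ x, h⟩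

theorem margXW_pos [Fintype Y] (hlaw : ∀ x y w, 0 ≤ law P r s x y w) {x : X} {y : Y} {w : W}
    (h : 0 < law P r s x y w) : 0 < margXW P r s x w :=
  sum_pos' (fun y' _ => hlaw x y' w) ⟨y, mem_univ y, h⟩

theorem margYW_pos [Fintype X] (hlaw : ∀ x y w, 0 ≤ law P r s x y w) {x : X} {y : Y} {w : W}
    (h : 0 < law P r s x y w) : 0 < margYW P r s y w :=
  sum_pos' (fun x' _ => hlaw x' y w) ⟨x, mem_univ x, h⟩

theorem margW_pos [Fintype X] [Fintype Y] (hlaw : ∀ x y w, 0 ≤ law P r s x y w)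
    {x : X} {y : Y} {w : W} (h : 0 < law P r s x y w) : 0 < margW P r s w :=
  sum_pos' (fun x' _ => sum_nonneg fun y' _ => hlaw x' y' w) ⟨x, mem_univ x, margXW_pos hlaw h⟩

theorem weightX_pos [Fintype X] [Fintype Y] (hP : ∀ x y, 0 ≤ P x y) (hr : ∀ w x, 0 ≤ r w x)
    {x : X} {w : W} (hx : 0 < margX P x) (hrwx : 0 < r w x) : 0 < weightX P r w :=
  sum_pos' (fun x' _ => mul_nonneg (sum_nonneg fun y _ => hP x' y) (hr w x'))
    ⟨x, mem_univ x, mul_pos hx hrwx⟩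

theorem weightX_nonneg [Fintype X] [Fintype Y] (hP : ∀ x y, 0 ≤ P x y)
    (hr : ∀ w x, 0 ≤ r w x) (w : W) : 0 ≤ weightX P r w :=
  sum_nonneg fun x _ => mul_nonneg (sum_nonneg fun y _ => hP x y) (hr w x)

theorem tiltedXW_nonneg [Fintype X] [Fintype Y] (hP : ∀ x y, 0 ≤ P x y)
    (hr : ∀ w x, 0 ≤ r w x) (hs : ∀ w y, 0 ≤ s w y) (x : X) (w : W) :
    0 ≤ tiltedXW P r s x w :=
  div_nonneg (mul_nonneg (sum_nonneg fun x' _ => sum_nonneg fun y _ => law_nonneg hP hr hs x' y w)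
    (mul_nonneg (sum_nonneg fun y _ => hP x y) (hr w x))) (weightX_nonneg hP hr w)

theorem indepYW_nonneg [Fintype X] [Fintype Y] (hP : ∀ x y, 0 ≤ P x y)
    (hr : ∀ w x, 0 ≤ r w x) (hs : ∀ w y, 0 ≤ s w y) (y : Y) (w : W) :
    0 ≤ indepYW P r s y w :=
  mul_nonneg (mul_nonneg (sum_nonneg fun x _ => hP x y) (hs w y)) (weightX_nonneg hP hr w)

theorem tiltedXW_pos [Fintype X] [Fintype Y] (hP : ∀ x y, 0 ≤ P x y) (hr : ∀ w x, 0 ≤ r w x)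
    (hs : ∀ w y, 0 ≤ s w y) {x : X} {w : W} (h : 0 < margXW P r s x w) :
    0 < tiltedXW P r s x w := by
  obtain ⟨y, hy⟩ := exists_pos_of_sum_pos h
  obtain ⟨hPxy, hrwx, -⟩ := pos_of_law_pos hP hr hs hy
  have hX := margX_pos hP hPxy
  exact div_pos (mul_pos (margW_pos (law_nonneg hP hr hs) hy) (mul_pos hX hrwx))
    (weightX_pos hP hr hX hrwx)

theorem indepYW_pos [Fintype X] [Fintype Y] (hP : ∀ x y, 0 ≤ P x y) (hr : ∀ w x, 0 ≤ r w x)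
    (hs : ∀ w y, 0 ≤ s w y) {y : Y} {w : W} (h : 0 < margYW P r s y w) :
    0 < indepYW P r s y w := by
  obtain ⟨x, hx⟩ := exists_pos_of_sum_pos h
  obtain ⟨hPxy, hrwx, hswy⟩ := pos_of_law_pos hP hr hs hx
  exact mul_pos (mul_pos (margY_pos hP hPxy) hswy) (weightX_pos hP hr (margX_pos hP hPxy) hrwx)

theorem law_mul_log_sub_eq [Fintype X] [Fintype Y] (hP : ∀ x y, 0 ≤ P x y)
    (hr : ∀ w x, 0 ≤ r w x) (hs : ∀ w y, 0 ≤ s w y) (x : X) (y : Y) (w : W) :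
    law P r s x y w * (log (law P r s x y w * margW P r s w / (margXW P r s x w * margYW P r s y w))
      - log (P x y / (margX P x * margY P y))) =
    law P r s x y w * (log (tiltedXW P r s x w / margXW P r s x w)
      + log (indepYW P r s y w / margYW P r s y w)) := by
  rcases (law_nonneg hP hr hs x y w).eq_or_lt with h | h
  · rw [← h, zero_mul, zero_mul]
  obtain ⟨hPxy, hrwx, hswy⟩ := pos_of_law_pos hP hr hs h
  have hlaw := law_nonneg hP hr hs
  have hX := margX_pos hP hPxy
  exact congrArg _ (log_div_sub_log_div_eq hPxy hrwx hswy hX (margY_pos hP hPxy)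
    (margXW_pos hlaw h) (margYW_pos hlaw h) (margW_pos hlaw h) (weightX_pos hP hr hX hrwx))

theorem condMutualInfo_law_sub_mutualInfo [Fintype X] [Fintype Y] [Fintype W]
    (hP : ∀ x y, 0 ≤ P x y) (hr : ∀ w x, 0 ≤ r w x) (hs : ∀ w y, 0 ≤ s w y)
    (hK : ∀ x y, ∑ w, r w x * s w y = 1) :
    condMutualInfo (law P r s) - mutualInfo P =
      ∑ x, ∑ w, margXW P r s x w * log (tiltedXW P r s x w / margXW P r s x w) +
      ∑ y, ∑ w, margYW P r s y w * log (indepYW P r s y w / margYW P r s y w) := by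
  have hmi : mutualInfo P =
      ∑ x, ∑ y, ∑ w, law P r s x y w * log (P x y / (margX P x * margY P y)) := by
    simp only [← sum_mul, sum_law hK]
    rfl
  calc condMutualInfo (law P r s) - mutualInfo P
      = ∑ x, ∑ y, ∑ w, law P r s x y w *
          (log (law P r s x y w * margW P r s w / (margXW P r s x w * margYW P r s y w))
            - log (P x y / (margX P x * margY P y))) := by
        rw [hmi]
        simp only [mul_sub, sum_sub_distrib]
        rfl
    _ = ∑ x, ∑ y, ∑ w, (law P r s x y w * log (tiltedXW P r s x w / margXW P r s x w)
          + law P r s x y w * log (indepYW P r s y w / margYW P r s y w)) := by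
        simp only [law_mul_log_sub_eq hP hr hs, mul_add]
    _ = _ := by
      simp only [sum_add_distrib]
      congr 1
      · refine sum_congr rfl fun x _ => ?_
        rw [sum_comm]
        simp only [← sum_mul]
        rfl
      · rw [sum_comm]
        refine sum_congr rfl fun y _ => ?_
        rw [sum_comm]
        simp only [← sum_mul]
        rfl

theorem sum_tiltedXW_le_margW [Fintype X] [Fintype Y] (hlaw : ∀ x y w, 0 ≤ law P r s x y w)
    (w : W) : ∑ x, tiltedXW P r s x w ≤ margW P r s w := by
  have hsum : ∑ x, tiltedXW P r s x w = margW P r s w * (weightX P r w / weightX P r w) := by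
    simp only [tiltedXW, ← sum_div, ← mul_sum]
    exact mul_div_assoc _ _ _
  rw [hsum]
  exact mul_le_of_le_one_right (sum_nonneg fun x _ => sum_nonneg fun y _ => hlaw x y w)
    (div_self_le_one _)

theorem sum_sum_margYW [Fintype X] [Fintype Y] [Fintype W] (hP : ∑ x, ∑ y, P x y = 1)
    (hK : ∀ x y, ∑ w, r w x * s w y = 1) : ∑ y, ∑ w, margYW P r s y w = 1 := by
  calc ∑ y, ∑ w, margYW P r s y w = ∑ y, ∑ x, P x y :=
        sum_congr rfl fun y _ => by simp only [margYW]; rw [sum_comm]; simp only [sum_law hK]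
    _ = 1 := by rw [sum_comm, hP]

theorem sum_sum_indepYW [Fintype X] [Fintype Y] [Fintype W] (hP : ∑ x, ∑ y, P x y = 1)
    (hK : ∀ x y, ∑ w, r w x * s w y = 1) : ∑ y, ∑ w, indepYW P r s y w = 1 := by
  have hY : ∑ y, margY P y = 1 := by rw [← hP, sum_comm]; rfl
  calc ∑ y, ∑ w, indepYW P r s y w
      = ∑ y, ∑ x, margX P x * margY P y * ∑ w, r w x * s w y := by
        simp only [indepYW, weightX, mul_sum]
        refine sum_congr rfl fun y _ => ?_
        rw [sum_comm]
        exact sum_congr rfl fun x _ => sum_congr rfl fun w _ => by ring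
    _ = 1 := by simp only [hK, mul_one, ← sum_mul, ← mul_sum, hP, margX, hY]

theorem condMutualInfo_law_le_mutualInfo [Fintype X] [Fintype Y] [Fintype W]
    (hP : ∀ x y, 0 ≤ P x y) (hP1 : ∑ x, ∑ y, P x y = 1) (hr : ∀ w x, 0 ≤ r w x)
    (hs : ∀ w y, 0 ≤ s w y) (hK : ∀ x y, ∑ w, r w x * s w y = 1) :
    condMutualInfo (law P r s) ≤ mutualInfo P := by
  have hlaw := law_nonneg hP hr hs
  have hXW : ∑ x, ∑ w, margXW P r s x w * log (tiltedXW P r s x w / margXW P r s x w) ≤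
      ∑ x, ∑ w, (tiltedXW P r s x w - margXW P r s x w) :=
    sum_le_sum fun x _ => sum_le_sum fun w _ => mul_log_div_le_sub
      (sum_nonneg fun y _ => hlaw x y w)
      (tiltedXW_nonneg hP hr hs x w)
      (tiltedXW_pos hP hr hs)
  have hYW : ∑ y, ∑ w, margYW P r s y w * log (indepYW P r s y w / margYW P r s y w) ≤
      ∑ y, ∑ w, (indepYW P r s y w - margYW P r s y w) :=
    sum_le_sum fun y _ => sum_le_sum fun w _ => mul_log_div_le_sub
      (sum_nonneg fun x _ => hlaw x y w)
      (indepYW_nonneg hP hr hs y w)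
      (indepYW_pos hP hr hs)
  have hX : ∑ x, ∑ w, (tiltedXW P r s x w - margXW P r s x w) ≤ 0 := by
    rw [sum_comm]
    exact sum_nonpos fun w _ => by
      rw [sum_sub_distrib, sub_nonpos]
      exact sum_tiltedXW_le_margW hlaw w
  have hY : ∑ y, ∑ w, (indepYW P r s y w - margYW P r s y w) = 0 := by
    simp only [sum_sub_distrib, sum_sum_indepYW hP1 hK, sum_sum_margYW hP1 hK, sub_self]
  linarith [condMutualInfo_law_sub_mutualInfo hP hr hs hK]

end FactorizedKernel

open FactorizedKernel in
theorem factorized_kernel_nonpositive_relational_memorization_general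
    {X Y W : Type*} [Fintype X] [Fintype Y] [Fintype W]
    (K : X → Y → W → ℝ)
    (hK0 : ∀ x y w, 0 ≤ K x y w) (hK1 : ∀ x y, ∑ w, K x y w = 1)
    (hfact : ∃ (r : W → X → ℝ) (s : W → Y → ℝ),
      ∀ x y w, K x y w = r w x * s w y) :
    ∀ P : X → Y → ℝ, (∀ x y, 0 ≤ P x y) → (∑ x, ∑ y, P x y = 1) →
      condMutualInfo (fun (x : X) (y : Y) (w : W) => P x y * K x y w)
        - mutualInfo (fun (x : X) (y : Y) => ∑ w : W, P x y * K x y w) ≤ 0 := by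
  intro P hP hP1
  obtain ⟨r, s, hrs⟩ := hfact
  -- `K ≥ 0` lets us replace `r` and `s` by their absolute values.
  have hK : K = fun x y w => |r w x| * |s w y| :=
    funext fun x => funext fun y => funext fun w => by
      rw [← abs_mul, ← hrs, abs_of_nonneg (hK0 x y w)]
  subst hK
  have hmarg : (fun x y => ∑ w, P x y * (|r w x| * |s w y|)) = P :=
    funext fun x => funext fun y => by rw [← mul_sum, hK1, mul_one]
  rw [hmarg, sub_nonpos]
  exact condMutualInfo_law_le_mutualInfo (r := fun w x => |r w x|) (s := fun w y => |s w y|)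
    hP hP1 (fun _ _ => abs_nonneg _) (fun _ _ => abs_nonneg _) hK1

/-- If the Markov kernel `K : X × Y → PMF(W)` is factorized,
i.e. `K(x,y)(w) = r(w,x) · s(w,y)`, then for every joint pmf `P` on `X × Y` the
Relational Memorization of the induced joint law `p(x,y,w) = P(x,y) K(x,y)(w)` is
nonpositive: `I(X ; Y | W) − I(X ; Y) ≤ 0`. -/
theorem factorized_kernel_nonpositive_relational_memorization
    {X Y W : Type*} [Fintype X] [Fintype Y] [Fintype W]
    [Nonempty X] [Nonempty Y] [Nonempty W]
    (K : X → Y → W → ℝ)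
    (hK0 : ∀ x y w, 0 ≤ K x y w) (hK1 : ∀ x y, ∑ w, K x y w = 1)
    (hfact : ∃ (r : W → X → ℝ) (s : W → Y → ℝ),
      ∀ x y w, K x y w = r w x * s w y) :
    ∀ P : X → Y → ℝ, (∀ x y, 0 ≤ P x y) → (∑ x, ∑ y, P x y = 1) →
      condMutualInfo (fun (x : X) (y : Y) (w : W) => P x y * K x y w)
        - mutualInfo (fun (x : X) (y : Y) => ∑ w : W, P x y * K x y w) ≤ 0 :=
  factorized_kernel_nonpositive_relational_memorization_general K hK0 hK1 hfact
end

section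
/- Let X, Y, W be finite nonempty sets and let K be a Markov kernel assigning to each pair (x,y) ∈ X × Y a probability mass function K(x,y)(·) on W. Suppose that for every joint probability mass function P on X × Y, letting (X, Y) ~ P and W be drawn from K(X,Y), the Relational Memorization is nonpositive, i.e., I(X ; Y | W) − I(X ; Y) ≤ 0. Then K is factorized: there exist functions r : W × X → ℝ and s : W × Y → ℝ such that K(x,y)(w) = r(w,x) · s(w,y) for all (x,y,w). -/
open scoped BigOperators

lemma RMaux.sum_collapse {X : Type*} [Fintype X] [DecidableEq X] {x1 x2 : X} (hx : x1 ≠ x2)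
    (F : X → ℝ) (h0 : ∀ x, x ≠ x1 → x ≠ x2 → F x = 0) : ∑ x, F x = F x1 + F x2 := by
  rw [← Finset.sum_pair hx]
  exact (Finset.sum_subset (Finset.subset_univ _) (fun x _ hx' => by
    simp only [Finset.mem_insert, Finset.mem_singleton, not_or] at hx'
    exact h0 x hx'.1 hx'.2)).symm

lemma RMaux.log_term_ge (u v : ℝ) (hu : 0 ≤ u) (hv : 0 ≤ v) (h0 : v = 0 → u = 0) :
    u - v ≤ u * Real.log (u / v) := by
  rcases eq_or_lt_of_le hu with h | h
  · simp [← h]; linarith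
  · have hv' : 0 < v := lt_of_le_of_ne hv fun he => by
      have := h0 he.symm; linarith
    have hlog : Real.log (v / u) ≤ v / u - 1 := Real.log_le_sub_one_of_pos (div_pos hv' h)
    have hrw : Real.log (u / v) = - Real.log (v / u) := by rw [← Real.log_inv, inv_div]
    have h2 : u * Real.log (v / u) ≤ v - u := by
      have h3 := mul_le_mul_of_nonneg_left hlog (le_of_lt h)
      have h4 : u * (v / u - 1) = v - u := by field_simp
      linarith [h4 ▸ h3]
    rw [hrw]; linarith

lemma RMaux.log_term_gt (u v : ℝ) (hu : 0 ≤ u) (hv : 0 ≤ v) (h0 : v = 0 → u = 0)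
    (hne : u ≠ v) : u - v < u * Real.log (u / v) := by
  rcases eq_or_lt_of_le hu with h | h
  · have hv' : 0 < v := lt_of_le_of_ne hv fun he => hne (he ▸ h.symm ▸ (h0 he.symm).symm ▸ rfl)
    simp [← h]; linarith
  · have hv' : 0 < v := lt_of_le_of_ne hv fun he => by
      have := h0 he.symm; linarith
    have hne1 : v / u ≠ 1 := by
      intro hc; apply hne; field_simp at hc; linarith
    have hlog : Real.log (v / u) < v / u - 1 := Real.log_lt_sub_one_of_pos (div_pos hv' h) hne1
    have hrw : Real.log (u / v) = - Real.log (v / u) := by rw [← Real.log_inv, inv_div]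
    have h2 : u * Real.log (v / u) < v - u := by
      have h3 := mul_lt_mul_of_pos_left hlog h
      have h4 : u * (v / u - 1) = v - u := by field_simp
      linarith [h4 ▸ h3]
    rw [hrw]; linarith

lemma RMaux.key (a b c d : ℝ) (ha : 0 ≤ a) (hb : 0 ≤ b) (hc : 0 ≤ c) (hd : 0 ≤ d) :
    (0 ≤ a * Real.log (a * (a + b + c + d) / ((a + b) * (a + c)))
      + b * Real.log (b * (a + b + c + d) / ((a + b) * (b + d)))
      + c * Real.log (c * (a + b + c + d) / ((c + d) * (a + c)))
      + d * Real.log (d * (a + b + c + d) / ((c + d) * (b + d))))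
    ∧ (a * d ≠ b * c →
      0 < a * Real.log (a * (a + b + c + d) / ((a + b) * (a + c)))
      + b * Real.log (b * (a + b + c + d) / ((a + b) * (b + d)))
      + c * Real.log (c * (a + b + c + d) / ((c + d) * (a + c)))
      + d * Real.log (d * (a + b + c + d) / ((c + d) * (b + d)))) := by
  set T : ℝ := a + b + c + d with hT
  rcases eq_or_lt_of_le (by positivity : (0:ℝ) ≤ T) with h0 | hTpos
  · have ha0 : a = 0 := by linarith
    have hb0 : b = 0 := by linarith
    have hc0 : c = 0 := by linarith
    have hd0 : d = 0 := by linarith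
    subst ha0 hb0 hc0 hd0
    norm_num
  · have hTne : T ≠ 0 := ne_of_gt hTpos
    set p11 : ℝ := (a + b) * (a + c) / T with hp11
    set p12 : ℝ := (a + b) * (b + d) / T with hp12
    set p21 : ℝ := (c + d) * (a + c) / T with hp21
    set p22 : ℝ := (c + d) * (b + d) / T with hp22
    have e11 : a * T / ((a + b) * (a + c)) = a / p11 := by rw [hp11, div_div_eq_mul_div]
    have e12 : b * T / ((a + b) * (b + d)) = b / p12 := by rw [hp12, div_div_eq_mul_div]
    have e21 : c * T / ((c + d) * (a + c)) = c / p21 := by rw [hp21, div_div_eq_mul_div]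
    have e22 : d * T / ((c + d) * (b + d)) = d / p22 := by rw [hp22, div_div_eq_mul_div]
    have hp11n : 0 ≤ p11 := by positivity
    have hp12n : 0 ≤ p12 := by positivity
    have hp21n : 0 ≤ p21 := by positivity
    have hp22n : 0 ≤ p22 := by positivity
    have z11 : p11 = 0 → a = 0 := by
      intro hp; rw [hp11, div_eq_zero_iff] at hp
      rcases hp with hp | hp
      · rcases mul_eq_zero.mp hp with h | h <;> linarith
      · exact absurd hp hTne
    have z12 : p12 = 0 → b = 0 := by
      intro hp; rw [hp12, div_eq_zero_iff] at hp
      rcases hp with hp | hp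
      · rcases mul_eq_zero.mp hp with h | h <;> linarith
      · exact absurd hp hTne
    have z21 : p21 = 0 → c = 0 := by
      intro hp; rw [hp21, div_eq_zero_iff] at hp
      rcases hp with hp | hp
      · rcases mul_eq_zero.mp hp with h | h <;> linarith
      · exact absurd hp hTne
    have z22 : p22 = 0 → d = 0 := by
      intro hp; rw [hp22, div_eq_zero_iff] at hp
      rcases hp with hp | hp
      · rcases mul_eq_zero.mp hp with h | h <;> linarith
      · exact absurd hp hTne
    have hpsum : p11 + p12 + p21 + p22 = T := by
      rw [hp11, hp12, hp21, hp22]; field_simp; ring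
    have g11 := RMaux.log_term_ge a p11 ha hp11n z11
    have g12 := RMaux.log_term_ge b p12 hb hp12n z12
    have g21 := RMaux.log_term_ge c p21 hc hp21n z21
    have g22 := RMaux.log_term_ge d p22 hd hp22n z22
    rw [e11, e12, e21, e22]
    constructor
    · linarith
    · intro hne
      have hnall : ¬ (a = p11 ∧ b = p12 ∧ c = p21 ∧ d = p22) := by
        rintro ⟨h1, h2, h3, h4⟩
        apply hne
        rw [h1, h2, h3, h4, hp11, hp12, hp21, hp22]
        field_simp
      by_cases k11 : a = p11
      · by_cases k12 : b = p12
        · by_cases k21 : c = p21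
          · have k22 : d ≠ p22 := fun h => hnall ⟨k11, k12, k21, h⟩
            have := RMaux.log_term_gt d p22 hd hp22n z22 k22
            linarith
          · have := RMaux.log_term_gt c p21 hc hp21n z21 k21
            linarith
        · have := RMaux.log_term_gt b p12 hb hp12n z12 k12
          linarith
      · have := RMaux.log_term_gt a p11 ha hp11n z11 k11
        linarith

lemma RMaux.div16 (u v : ℝ) : u / 16 / (v / 16) = u / v := by
  rcases eq_or_ne v 0 with h | h
  · simp [h]
  · field_simp

lemma RMaux.pointwise (a b c d : ℝ) :
    1/4 * a * Real.log (1/4 * a * ((a + b + c + d) / 4) /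
        ((1/4 * a + 1/4 * b) * (1/4 * a + 1/4 * c)))
    + 1/4 * b * Real.log (1/4 * b * ((a + b + c + d) / 4) /
        ((1/4 * a + 1/4 * b) * (1/4 * b + 1/4 * d)))
    + (1/4 * c * Real.log (1/4 * c * ((a + b + c + d) / 4) /
        ((1/4 * c + 1/4 * d) * (1/4 * a + 1/4 * c)))
    + 1/4 * d * Real.log (1/4 * d * ((a + b + c + d) / 4) /
        ((1/4 * c + 1/4 * d) * (1/4 * b + 1/4 * d))))
    = (a * Real.log (a * (a + b + c + d) / ((a + b) * (a + c)))
      + b * Real.log (b * (a + b + c + d) / ((a + b) * (b + d)))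
      + c * Real.log (c * (a + b + c + d) / ((c + d) * (a + c)))
      + d * Real.log (d * (a + b + c + d) / ((c + d) * (b + d)))) / 4 := by
  have e11 : 1/4 * a * ((a + b + c + d) / 4) / ((1/4 * a + 1/4 * b) * (1/4 * a + 1/4 * c))
      = a * (a + b + c + d) / ((a + b) * (a + c)) := by
    rw [show 1/4 * a * ((a + b + c + d) / 4) = a * (a + b + c + d) / 16 from by ring,
        show (1/4 * a + 1/4 * b) * (1/4 * a + 1/4 * c) = (a + b) * (a + c) / 16 from by ring,
        RMaux.div16]
  have e12 : 1/4 * b * ((a + b + c + d) / 4) / ((1/4 * a + 1/4 * b) * (1/4 * b + 1/4 * d))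
      = b * (a + b + c + d) / ((a + b) * (b + d)) := by
    rw [show 1/4 * b * ((a + b + c + d) / 4) = b * (a + b + c + d) / 16 from by ring,
        show (1/4 * a + 1/4 * b) * (1/4 * b + 1/4 * d) = (a + b) * (b + d) / 16 from by ring,
        RMaux.div16]
  have e21 : 1/4 * c * ((a + b + c + d) / 4) / ((1/4 * c + 1/4 * d) * (1/4 * a + 1/4 * c))
      = c * (a + b + c + d) / ((c + d) * (a + c)) := by
    rw [show 1/4 * c * ((a + b + c + d) / 4) = c * (a + b + c + d) / 16 from by ring,
        show (1/4 * c + 1/4 * d) * (1/4 * a + 1/4 * c) = (c + d) * (a + c) / 16 from by ring,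
        RMaux.div16]
  have e22 : 1/4 * d * ((a + b + c + d) / 4) / ((1/4 * c + 1/4 * d) * (1/4 * b + 1/4 * d))
      = d * (a + b + c + d) / ((c + d) * (b + d)) := by
    rw [show 1/4 * d * ((a + b + c + d) / 4) = d * (a + b + c + d) / 16 from by ring,
        show (1/4 * c + 1/4 * d) * (1/4 * b + 1/4 * d) = (c + d) * (b + d) / 16 from by ring,
        RMaux.div16]
  rw [e11, e12, e21, e22]; ring

/-- If for every joint pmf `P` on `X × Y` the Relational
Memorization of the joint law `p(x,y,w) = P(x,y) K(x,y)(w)` induced by the Markov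
kernel `K : X × Y → PMF(W)` is nonpositive, `I(X ; Y | W) − I(X ; Y) ≤ 0`, then
`K` is factorized: `K(x,y)(w) = r(w,x) · s(w,y)` for some `r, s`. -/
theorem nonpositive_relational_memorization_implies_factorized
    {X Y W : Type*} [Fintype X] [Fintype Y] [Fintype W]
    [Nonempty X] [Nonempty Y] [Nonempty W]
    (K : X → Y → W → ℝ)
    (hK0 : ∀ x y w, 0 ≤ K x y w) (hK1 : ∀ x y, ∑ w, K x y w = 1)
    (hRM : ∀ P : X → Y → ℝ, (∀ x y, 0 ≤ P x y) → (∑ x, ∑ y, P x y = 1) →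
      condMutualInfo (fun (x : X) (y : Y) (w : W) => P x y * K x y w)
        - mutualInfo (fun (x : X) (y : Y) => ∑ w : W, P x y * K x y w) ≤ 0) :
    ∃ (r : W → X → ℝ) (s : W → Y → ℝ), ∀ x y w, K x y w = r w x * s w y := by
  classical
  have hdet : ∀ x1 x2 y1 y2 w, K x1 y1 w * K x2 y2 w = K x1 y2 w * K x2 y1 w := by
    intro x1 x2 y1 y2 w0
    by_cases hxe : x1 = x2
    · subst hxe; ring
    by_cases hye : y1 = y2
    · subst hye; ring
    have hx : x1 ≠ x2 := hxe
    have hy : y1 ≠ y2 := hye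
    by_contra hne
    set P : X → Y → ℝ := fun x y =>
      ((if x = x1 then (1:ℝ) else 0) + (if x = x2 then 1 else 0)) *
      ((if y = y1 then (1:ℝ) else 0) + (if y = y2 then 1 else 0)) / 4 with hPdef
    have hPv11 : P x1 y1 = 1/4 := by simp [hPdef, hx, hy]
    have hPv12 : P x1 y2 = 1/4 := by simp [hPdef, hx, hy.symm]
    have hPv21 : P x2 y1 = 1/4 := by simp [hPdef, hx.symm, hy]
    have hPv22 : P x2 y2 = 1/4 := by simp [hPdef, hx.symm, hy.symm]
    have hP0x : ∀ x y, x ≠ x1 → x ≠ x2 → P x y = 0 := by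
      intro x y h1 h2; simp [hPdef, h1, h2]
    have hP0y : ∀ x y, y ≠ y1 → y ≠ y2 → P x y = 0 := by
      intro x y h1 h2; simp [hPdef, h1, h2]
    have hPnn : ∀ x y, 0 ≤ P x y := by
      intro x y
      rw [hPdef]
      have h1 : (0:ℝ) ≤ (if x = x1 then (1:ℝ) else 0) + (if x = x2 then 1 else 0) := by
        apply add_nonneg <;> split <;> norm_num
      have h2 : (0:ℝ) ≤ (if y = y1 then (1:ℝ) else 0) + (if y = y2 then 1 else 0) := by
        apply add_nonneg <;> split <;> norm_num
      positivity
    have hP1 : ∑ x, ∑ y, P x y = 1 := by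
      rw [RMaux.sum_collapse hx (fun x => ∑ y, P x y)
          (fun x h1 h2 => Finset.sum_eq_zero fun y _ => hP0x x y h1 h2),
        RMaux.sum_collapse hy (fun y => P x1 y) (fun y h1 h2 => hP0y x1 y h1 h2),
        RMaux.sum_collapse hy (fun y => P x2 y) (fun y h1 h2 => hP0y x2 y h1 h2),
        hPv11, hPv12, hPv21, hPv22]
      norm_num
    have hmarg : ∀ x y, (∑ w, P x y * K x y w) = P x y := by
      intro x y; rw [← Finset.mul_sum, hK1, mul_one]
    have hrowP : ∀ x, (∑ y', P x y') = P x y1 + P x y2 := fun x =>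
      RMaux.sum_collapse hy _ (fun y h1 h2 => hP0y x y h1 h2)
    have hcolP : ∀ y, (∑ x', P x' y) = P x1 y + P x2 y := fun y =>
      RMaux.sum_collapse hx _ (fun x h1 h2 => hP0x x y h1 h2)
    have hMI : mutualInfo (fun x y => ∑ w : W, P x y * K x y w) = 0 := by
      simp only [mutualInfo, hmarg]
      apply Finset.sum_eq_zero; intro x _
      apply Finset.sum_eq_zero; intro y _
      by_cases hxx : x = x1 ∨ x = x2
      · by_cases hyy : y = y1 ∨ y = y2
        · rw [hrowP x, hcolP y]
          rcases hxx with h | h <;> rcases hyy with h' | h' <;> subst h <;> subst h' <;>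
            simp only [hPv11, hPv12, hPv21, hPv22] <;> norm_num
        · push_neg at hyy
          simp [hP0y x y hyy.1 hyy.2]
      · push_neg at hxx
        simp [hP0x x y hxx.1 hxx.2]
    have hm : ∀ w, (∑ x, ∑ y, P x y * K x y w)
        = (K x1 y1 w + K x1 y2 w + K x2 y1 w + K x2 y2 w) / 4 := by
      intro w
      rw [RMaux.sum_collapse hx (fun x => ∑ y, P x y * K x y w)
          (fun x h1 h2 => Finset.sum_eq_zero fun y _ => by rw [hP0x x y h1 h2, zero_mul]),
        RMaux.sum_collapse hy (fun y => P x1 y * K x1 y w)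
          (fun y h1 h2 => by simp [hP0y x1 y h1 h2]),
        RMaux.sum_collapse hy (fun y => P x2 y * K x2 y w)
          (fun y h1 h2 => by simp [hP0y x2 y h1 h2]),
        hPv11, hPv12, hPv21, hPv22]
      ring
    have hrow : ∀ x w, (∑ y, P x y * K x y w) = P x y1 * K x y1 w + P x y2 * K x y2 w := by
      intro x w
      exact RMaux.sum_collapse hy _ (fun y h1 h2 => by rw [hP0y x y h1 h2, zero_mul])
    have hcol : ∀ y w, (∑ x, P x y * K x y w) = P x1 y * K x1 y w + P x2 y * K x2 y w := by
      intro y w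
      exact RMaux.sum_collapse hx _ (fun x h1 h2 => by rw [hP0x x y h1 h2, zero_mul])
    have hCMIeq : condMutualInfo (fun (x : X) (y : Y) (w : W) => P x y * K x y w)
        = ∑ w, (K x1 y1 w * Real.log (K x1 y1 w * (K x1 y1 w + K x1 y2 w + K x2 y1 w + K x2 y2 w)
              / ((K x1 y1 w + K x1 y2 w) * (K x1 y1 w + K x2 y1 w)))
          + K x1 y2 w * Real.log (K x1 y2 w * (K x1 y1 w + K x1 y2 w + K x2 y1 w + K x2 y2 w)
              / ((K x1 y1 w + K x1 y2 w) * (K x1 y2 w + K x2 y2 w)))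
          + K x2 y1 w * Real.log (K x2 y1 w * (K x1 y1 w + K x1 y2 w + K x2 y1 w + K x2 y2 w)
              / ((K x2 y1 w + K x2 y2 w) * (K x1 y1 w + K x2 y1 w)))
          + K x2 y2 w * Real.log (K x2 y2 w * (K x1 y1 w + K x1 y2 w + K x2 y1 w + K x2 y2 w)
              / ((K x2 y1 w + K x2 y2 w) * (K x1 y2 w + K x2 y2 w)))) / 4 := by
      simp only [condMutualInfo]
      rw [RMaux.sum_collapse hx]
      swap
      · intro x h1 h2
        exact Finset.sum_eq_zero fun y _ => Finset.sum_eq_zero fun w _ => by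
          simp [hP0x x y h1 h2]
      rw [RMaux.sum_collapse hy]
      swap
      · intro y h1 h2
        exact Finset.sum_eq_zero fun w _ => by simp [hP0y x1 y h1 h2]
      rw [RMaux.sum_collapse hy]
      swap
      · intro y h1 h2
        exact Finset.sum_eq_zero fun w _ => by simp [hP0y x2 y h1 h2]
      simp only [hm]
      simp only [hrow, hcol]
      simp only [hPv11, hPv12, hPv21, hPv22]
      rw [← Finset.sum_add_distrib, ← Finset.sum_add_distrib, ← Finset.sum_add_distrib]
      refine Finset.sum_congr rfl fun w _ => ?_
      exact RMaux.pointwise (K x1 y1 w) (K x1 y2 w) (K x2 y1 w) (K x2 y2 w)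
    have hRM' := hRM P hPnn hP1
    rw [hMI, sub_zero, hCMIeq] at hRM'
    have hpos : 0 < ∑ w, (K x1 y1 w * Real.log (K x1 y1 w * (K x1 y1 w + K x1 y2 w + K x2 y1 w + K x2 y2 w)
              / ((K x1 y1 w + K x1 y2 w) * (K x1 y1 w + K x2 y1 w)))
          + K x1 y2 w * Real.log (K x1 y2 w * (K x1 y1 w + K x1 y2 w + K x2 y1 w + K x2 y2 w)
              / ((K x1 y1 w + K x1 y2 w) * (K x1 y2 w + K x2 y2 w)))
          + K x2 y1 w * Real.log (K x2 y1 w * (K x1 y1 w + K x1 y2 w + K x2 y1 w + K x2 y2 w)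
              / ((K x2 y1 w + K x2 y2 w) * (K x1 y1 w + K x2 y1 w)))
          + K x2 y2 w * Real.log (K x2 y2 w * (K x1 y1 w + K x1 y2 w + K x2 y1 w + K x2 y2 w)
              / ((K x2 y1 w + K x2 y2 w) * (K x1 y2 w + K x2 y2 w)))) / 4 := by
      apply Finset.sum_pos'
      · intro w _
        exact div_nonneg (RMaux.key (K x1 y1 w) (K x1 y2 w) (K x2 y1 w) (K x2 y2 w)
          (hK0 _ _ _) (hK0 _ _ _) (hK0 _ _ _) (hK0 _ _ _)).1 (by norm_num)
      · refine ⟨w0, Finset.mem_univ w0, ?_⟩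
        exact div_pos ((RMaux.key (K x1 y1 w0) (K x1 y2 w0) (K x2 y1 w0) (K x2 y2 w0)
          (hK0 _ _ _) (hK0 _ _ _) (hK0 _ _ _) (hK0 _ _ _)).2 hne) (by norm_num)
    linarith
  refine ⟨fun w x => if h : ∃ p : X × Y, K p.1 p.2 w ≠ 0 then K x h.choose.2 w else 0,
    fun w y => if h : ∃ p : X × Y, K p.1 p.2 w ≠ 0
      then K h.choose.1 y w / K h.choose.1 h.choose.2 w else 0,
    fun x y w => ?_⟩
  by_cases h : ∃ p : X × Y, K p.1 p.2 w ≠ 0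
  · simp only [dif_pos h]
    have hc : K h.choose.1 h.choose.2 w ≠ 0 := h.choose_spec
    have hd := hdet x h.choose.1 y h.choose.2 w
    field_simp
    linear_combination hd
  · simp only [dif_neg h]
    push_neg at h
    rw [mul_zero]
    exact h (x, y)
end

section
/- Let n and d be positive integers with d ≥ n, let X ∈ ℝ^n, let Y be an n × d real matrix such that Y Yᵀ is invertible, and let Z = [X, Y] be the n × (d+1) matrix whose first column is X and whose remaining columns are those of Y. Define v = (1, −Yᵀ (Y Yᵀ)⁻¹ X) ∈ ℝ^{d+1} and w* = e_1 + v / ‖v‖². Then Z w* = X; that is, w* interpolates the data and is a global minimizer of the empirical loss L(w) = (1/(2n)) Σ_{i=1}^n ( ⟨w, z_i⟩ − x_i )². -/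
open scoped BigOperators
open Matrix

/-- The empirical loss `L(w) = (1/(2n)) ∑ i ( ⟨w, z_i⟩ − x_i )²`, where `z_i` is
the `i`-th row of `Z` and `x_i` the `i`-th entry of `X`. -/
noncomputable def empLoss {n d : ℕ} (Z : Matrix (Fin n) (Fin (d + 1)) ℝ)
    (X : Fin n → ℝ) (w : Fin (d + 1) → ℝ) : ℝ :=
  (1 / (2 * (n : ℝ))) * ∑ i, (Z.mulVec w i - X i) ^ 2

/-- Let `d ≥ n`, `Y Yᵀ` invertible, `Z = [X, Y]`,
`v = (1, −Yᵀ (Y Yᵀ)⁻¹ X)` and `w* = e₁ + v / ‖v‖²`. Then `Z w* = X`: `w*`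
interpolates the data and is a global minimizer of the empirical loss. -/
theorem interpolating_minimizer_overparametrized
    {n d : ℕ} (hn : 0 < n) (hd : 0 < d) (hdn : n ≤ d)
    (X : Fin n → ℝ) (Y : Matrix (Fin n) (Fin d) ℝ)
    (hY : IsUnit (Y * Yᵀ).det)
    (Z : Matrix (Fin n) (Fin (d + 1)) ℝ)
    (hZ : ∀ i, Z i = Fin.cons (X i) (Y i))
    (v : Fin (d + 1) → ℝ)
    (hv : v = Fin.cons 1 (-((Yᵀ * (Y * Yᵀ)⁻¹).mulVec X)))
    (wstar : Fin (d + 1) → ℝ)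
    (hw : wstar = Pi.single 0 1 + (∑ j, v j ^ 2)⁻¹ • v) :
    Z.mulVec wstar = X ∧ ∀ w, empLoss Z X wstar ≤ empLoss Z X w := by
  have hinv : Y * Yᵀ * (Y * Yᵀ)⁻¹ = 1 := Matrix.mul_nonsing_inv _ hY
  have hZv : Z.mulVec v = 0 := by
    funext i
    have h1 : Z.mulVec v i
        = X i * 1 + ∑ j, Y i j * (-((Yᵀ * (Y * Yᵀ)⁻¹).mulVec X)) j := by
      simp [Matrix.mulVec, dotProduct, Fin.sum_univ_succ, hZ, hv]
    have h2 : ∑ j, Y i j * ((Yᵀ * (Y * Yᵀ)⁻¹).mulVec X) j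
        = (Y * (Yᵀ * (Y * Yᵀ)⁻¹)).mulVec X i := by
      have : ∑ j, Y i j * ((Yᵀ * (Y * Yᵀ)⁻¹).mulVec X) j
          = Y.mulVec ((Yᵀ * (Y * Yᵀ)⁻¹).mulVec X) i := rfl
      rw [this, Matrix.mulVec_mulVec]
    have h3 : Y * (Yᵀ * (Y * Yᵀ)⁻¹) = Y * Yᵀ * (Y * Yᵀ)⁻¹ := by rw [Matrix.mul_assoc]
    simp only [Pi.neg_apply, mul_neg, Finset.sum_neg_distrib] at h1
    rw [h2, h3, hinv, Matrix.one_mulVec] at h1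
    simpa using h1
  have hZ1 : Z.mulVec (Pi.single 0 1) = X := by
    funext i
    rw [Matrix.mulVec_single]
    simp [hZ]
  have hZw : Z.mulVec wstar = X := by
    rw [hw, Matrix.mulVec_add, Matrix.mulVec_smul, hZv, hZ1]
    simp
  refine ⟨hZw, fun w => ?_⟩
  have h0 : empLoss Z X wstar = 0 := by
    simp [empLoss, hZw]
  rw [h0]
  have : 0 ≤ ∑ i, (Z.mulVec w i - X i) ^ 2 :=
    Finset.sum_nonneg fun i _ => sq_nonneg _
  have hn' : (0:ℝ) ≤ 1 / (2 * (n : ℝ)) := by positivity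
  exact mul_nonneg hn' this
end

section
/- Let n and d be positive integers with d ≥ n, let X ∈ ℝ^n, let Y be an n × d real matrix such that Y Yᵀ is invertible, let v = (1, −Yᵀ (Y Yᵀ)⁻¹ X) ∈ ℝ^{d+1} and w* = e_1 + v / ‖v‖². Then: (i) ⟨w*, e_1⟩ = 1 + 1/‖v‖², so an attacker querying the trained model at e_1 recovers ‖v‖²; (ii) for every index i, querying the model at the corrupted input z̃_i = (0, y_i) (where y_i is the i-th row of Y) yields ⟨w*, z̃_i⟩ = −x_i / ‖v‖²; consequently x_i = −⟨w*, z̃_i⟩ / ( ⟨w*, e_1⟩ − 1 ), i.e., the attacker can exactly reconstruct x_i from the model w* and the partial sample y_i. -/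
open scoped BigOperators
open Matrix

/-!
The first coordinate of `v` is `1`, so `‖v‖² ≥ 1` and querying at `e₁` returns `1 + 1/‖v‖²`.
Since `Yᵀ (Y Yᵀ)⁻¹` is a right inverse of `Y`, the row `yᵢ` pairs with `Yᵀ (Y Yᵀ)⁻¹ X` to give
exactly `xᵢ`; hence `⟨v, (0, yᵢ)⟩ = -xᵢ`, and the query at `(0, yᵢ)` returns `-xᵢ/‖v‖²`.
Dividing the two answers (after subtracting `1` from the first) recovers `xᵢ`.
-/

theorem Matrix.mul_transpose_mul_nonsing_inv {m n R : Type*} [Fintype m] [DecidableEq m]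
    [Fintype n] [CommRing R] (Y : Matrix m n R) (hY : IsUnit (Y * Yᵀ).det) :
    Y * (Yᵀ * (Y * Yᵀ)⁻¹) = 1 := by
  rw [← Matrix.mul_assoc, mul_nonsing_inv _ hY]

theorem cons_one_neg_mulVec_dotProduct_cons_zero {m R : Type*} [Fintype m] [DecidableEq m]
    [CommRing R] {k : ℕ} {Y : Matrix m (Fin k) R} {B : Matrix (Fin k) m R} (hYB : Y * B = 1)
    (x : m → R) (i : m) :
    (Fin.cons 1 (-(B *ᵥ x)) : Fin (k + 1) → R) ⬝ᵥ Fin.cons 0 (Y i) = -x i := by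
  have hrow : Y i ⬝ᵥ (B *ᵥ x) = x i := by
    change (Y *ᵥ (B *ᵥ x)) i = x i
    rw [mulVec_mulVec, hYB, one_mulVec]
  rw [← hrow, dotProduct_comm (Y i), ← neg_dotProduct]
  change vecCons 1 (-(B *ᵥ x)) ⬝ᵥ vecCons 0 (Y i) = _
  rw [cons_dotProduct_cons, mul_zero, zero_add]

theorem one_le_sum_sq_of_apply_eq_one {ι : Type*} [Fintype ι] {v : ι → ℝ} {j₀ : ι}
    (h : v j₀ = 1) : 1 ≤ ∑ j, v j ^ 2 :=
  calc (1 : ℝ) = v j₀ ^ 2 := by rw [h, one_pow]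
    _ ≤ ∑ j, v j ^ 2 := Finset.single_le_sum (fun j _ => sq_nonneg (v j)) (Finset.mem_univ j₀)

section Queries

variable {ι K : Type*} [Fintype ι] [DecidableEq ι] [CommSemiring K]

theorem single_add_smul_dotProduct_single {v : ι → K} {j₀ : ι} (hv : v j₀ = 1) (c : K) :
    (Pi.single j₀ 1 + c • v) ⬝ᵥ Pi.single j₀ 1 = 1 + c := by
  simp [hv]

theorem single_add_smul_dotProduct_of_apply_eq_zero (v : ι → K) {z : ι → K} {j₀ : ι}
    (hz : z j₀ = 0) (c : K) :
    (Pi.single j₀ 1 + c • v) ⬝ᵥ z = c * (v ⬝ᵥ z) := by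
  simp [add_dotProduct, single_dotProduct, hz]

end Queries

theorem attacker_reconstructs_private_component_general
    {n d : ℕ}
    (X : Fin n → ℝ) (Y : Matrix (Fin n) (Fin d) ℝ)
    (hY : IsUnit (Y * Yᵀ).det)
    (v : Fin (d + 1) → ℝ)
    (hv : v = Fin.cons 1 (-((Yᵀ * (Y * Yᵀ)⁻¹).mulVec X)))
    (wstar : Fin (d + 1) → ℝ)
    (hw : wstar = Pi.single 0 1 + (∑ j, v j ^ 2)⁻¹ • v) :
    dotProduct wstar (Pi.single 0 1) = 1 + (∑ j, v j ^ 2)⁻¹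
    ∧ ∀ i : Fin n,
        dotProduct wstar (Fin.cons 0 (Y i)) = -(X i) / (∑ j, v j ^ 2)
        ∧ X i = -(dotProduct wstar (Fin.cons 0 (Y i)))
            / (dotProduct wstar (Pi.single 0 1) - 1) := by
  set S := ∑ j, v j ^ 2
  have hv0 : v 0 = 1 := by rw [hv]; rfl
  have hS : S ≠ 0 := (zero_lt_one.trans_le (one_le_sum_sq_of_apply_eq_one hv0)).ne'
  have hquery_e₁ : wstar ⬝ᵥ Pi.single 0 1 = 1 + S⁻¹ := by
    rw [hw, single_add_smul_dotProduct_single hv0]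
  have hquery_row (i : Fin n) : wstar ⬝ᵥ Fin.cons 0 (Y i) = -X i / S := by
    rw [hw, single_add_smul_dotProduct_of_apply_eq_zero v (Fin.cons_zero 0 (Y i)), hv,
      cons_one_neg_mulVec_dotProduct_cons_zero (Y.mul_transpose_mul_nonsing_inv hY),
      div_eq_inv_mul]
  refine ⟨hquery_e₁, fun i => ⟨hquery_row i, ?_⟩⟩
  rw [hquery_e₁, hquery_row, add_sub_cancel_left]
  field_simp

/-- Let `d ≥ n`, `Y Yᵀ` invertible, `v = (1, −Yᵀ (Y Yᵀ)⁻¹ X)`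
and `w* = e₁ + v / ‖v‖²`. Then (i) `⟨w*, e₁⟩ = 1 + 1/‖v‖²`, so querying the
trained model at `e₁` recovers `‖v‖²`; (ii) for every `i`, querying at the
corrupted input `z̃ᵢ = (0, yᵢ)` yields `⟨w*, z̃ᵢ⟩ = −xᵢ/‖v‖²`; consequently
`xᵢ = −⟨w*, z̃ᵢ⟩ / (⟨w*, e₁⟩ − 1)`: the attacker exactly reconstructs `xᵢ`
from the model `w*` and the partial sample `yᵢ`. -/
theorem attacker_reconstructs_private_component
    {n d : ℕ} (hn : 0 < n) (hd : 0 < d) (hdn : n ≤ d)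
    (X : Fin n → ℝ) (Y : Matrix (Fin n) (Fin d) ℝ)
    (hY : IsUnit (Y * Yᵀ).det)
    (v : Fin (d + 1) → ℝ)
    (hv : v = Fin.cons 1 (-((Yᵀ * (Y * Yᵀ)⁻¹).mulVec X)))
    (wstar : Fin (d + 1) → ℝ)
    (hw : wstar = Pi.single 0 1 + (∑ j, v j ^ 2)⁻¹ • v) :
    dotProduct wstar (Pi.single 0 1) = 1 + (∑ j, v j ^ 2)⁻¹
    ∧ ∀ i : Fin n,
        dotProduct wstar (Fin.cons 0 (Y i)) = -(X i) / (∑ j, v j ^ 2)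
        ∧ X i = -(dotProduct wstar (Fin.cons 0 (Y i)))
            / (dotProduct wstar (Pi.single 0 1) - 1) :=
  attacker_reconstructs_private_component_general X Y hY v hv wstar hw
end

section
/- Let m and n be positive integers. Let X be uniformly distributed on a finite set of size m, let X' be an independent copy of X, and let B be an independent Bernoulli random variable with P(B = 1) = 1/n. Define R = X if B = 1 and R = X' if B = 0. Then the mutual information between R and X equals exactly I(R ; X) = ((m−1)/m) · ((n−1)/n) · log( (n−1)/n ) + ((m + n − 1)/(m n)) · log( (m + n − 1)/n ). -/
open scoped BigOperators

/-- Let `X` be uniform on a set of size `m`, `X'` an independent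
copy of `X`, and `B` an independent Bernoulli with `P(B = 1) = 1/n`. Let
`R = X` if `B = 1` and `R = X'` if `B = 0`. The joint pmf of `(X, X', B)` is
`q(x, x', b) = (1/m)(1/m)(1/n if b else (n−1)/n)`, and the joint pmf of `(R, X)`
is its pushforward. Then
`I(R ; X) = ((m−1)/m)((n−1)/n) log((n−1)/n) + ((m+n−1)/(mn)) log((m+n−1)/n)`. -/
theorem mutual_info_of_recovery_attack
    (m n : ℕ) (hm : 0 < m) (hn : 0 < n) :
    mutualInfo (fun (r x : Fin m) =>
      ∑ x' : Fin m, ∑ b : Bool,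
        if (if b then x else x') = r then
          (1 / (m : ℝ)) * (1 / (m : ℝ)) *
            (if b then 1 / (n : ℝ) else ((n : ℝ) - 1) / (n : ℝ))
        else 0)
    = (((m : ℝ) - 1) / (m : ℝ)) * (((n : ℝ) - 1) / (n : ℝ))
        * Real.log (((n : ℝ) - 1) / (n : ℝ))
      + (((m : ℝ) + (n : ℝ) - 1) / ((m : ℝ) * (n : ℝ)))
        * Real.log (((m : ℝ) + (n : ℝ) - 1) / (n : ℝ)) := by
  have hm0 : (m : ℝ) ≠ 0 := Nat.cast_ne_zero.mpr hm.ne'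
  have hn0 : (n : ℝ) ≠ 0 := Nat.cast_ne_zero.mpr hn.ne'
  set c : ℝ := ((n : ℝ) - 1) / ((m : ℝ) ^ 2 * (n : ℝ)) with hc
  set d : ℝ := 1 / ((m : ℝ) * (n : ℝ)) with hd
  -- the joint pmf simplifies
  have hp : ∀ r x : Fin m,
      (∑ x' : Fin m, ∑ b : Bool,
        if (if b then x else x') = r then
          (1 / (m : ℝ)) * (1 / (m : ℝ)) *
            (if b then 1 / (n : ℝ) else ((n : ℝ) - 1) / (n : ℝ))
        else 0) = c + (if x = r then d else 0) := by
    intro r x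
    have hb : ∀ x' : Fin m,
        (∑ b : Bool, if (if b then x else x') = r then
          (1 / (m : ℝ)) * (1 / (m : ℝ)) *
            (if b then 1 / (n : ℝ) else ((n : ℝ) - 1) / (n : ℝ)) else 0)
        = (if x = r then (1 / (m : ℝ)) * (1 / (m : ℝ)) * (1 / (n : ℝ)) else 0)
          + (if x' = r then (1 / (m : ℝ)) * (1 / (m : ℝ)) * (((n : ℝ) - 1) / (n : ℝ)) else 0) := by
      intro x'
      rw [Fintype.sum_bool]
      simp
    rw [Finset.sum_congr rfl (fun x' _ => hb x'), Finset.sum_add_distrib,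
      Finset.sum_const, Finset.sum_ite_eq' Finset.univ r
        (fun _ => (1 / (m : ℝ)) * (1 / (m : ℝ)) * (((n : ℝ) - 1) / (n : ℝ)))]
    simp only [Finset.card_univ, Fintype.card_fin, Finset.mem_univ, if_true, nsmul_eq_mul]
    rw [hc, hd]
    split
    · field_simp
      ring
    · rw [mul_zero, zero_add, add_zero]
      field_simp
  unfold mutualInfo
  simp only [hp]
  -- marginals are 1/m
  have hmarg1 : ∀ r : Fin m, (∑ x : Fin m, (c + if x = r then d else 0)) = 1 / (m : ℝ) := by
    intro r
    rw [Finset.sum_add_distrib, Finset.sum_const,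
      Finset.sum_ite_eq' Finset.univ r (fun _ => d)]
    simp only [Finset.card_univ, Fintype.card_fin, Finset.mem_univ, if_true, nsmul_eq_mul]
    rw [hc, hd]; field_simp; ring
  have hmarg2 : ∀ x : Fin m, (∑ r : Fin m, (c + if x = r then d else 0)) = 1 / (m : ℝ) := by
    intro x
    rw [Finset.sum_add_distrib, Finset.sum_const,
      Finset.sum_ite_eq Finset.univ x (fun _ => d)]
    simp only [Finset.card_univ, Fintype.card_fin, Finset.mem_univ, if_true, nsmul_eq_mul]
    rw [hc, hd]; field_simp; ring
  simp only [hmarg1, hmarg2]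
  set L1 : ℝ := Real.log (((m : ℝ) + (n : ℝ) - 1) / (n : ℝ)) with hL1
  set L2 : ℝ := Real.log (((n : ℝ) - 1) / (n : ℝ)) with hL2
  have hterm : ∀ (r x : Fin m),
      (c + if x = r then d else 0) *
        Real.log ((c + if x = r then d else 0) / (1 / (m : ℝ) * (1 / (m : ℝ))))
      = c * L2 + (if x = r then (c + d) * L1 - c * L2 else 0) := by
    intro r x
    by_cases h : x = r
    · simp only [h, if_true]
      have : (c + d) / (1 / (m : ℝ) * (1 / (m : ℝ))) = ((m : ℝ) + (n : ℝ) - 1) / (n : ℝ) := by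
        rw [hc, hd]; field_simp; ring
      rw [this, ← hL1]; ring
    · simp only [h, if_false]
      have : (c + 0) / (1 / (m : ℝ) * (1 / (m : ℝ))) = ((n : ℝ) - 1) / (n : ℝ) := by
        rw [hc]; field_simp; ring
      rw [add_zero] at this ⊢
      rw [this, ← hL2]; ring
  simp only [hterm]
  have hinner : ∀ r : Fin m,
      (∑ x : Fin m, (c * L2 + (if x = r then (c + d) * L1 - c * L2 else 0)))
      = (m : ℝ) * (c * L2) + ((c + d) * L1 - c * L2) := by
    intro r
    rw [Finset.sum_add_distrib, Finset.sum_const,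
      Finset.sum_ite_eq' Finset.univ r (fun _ => (c + d) * L1 - c * L2)]
    simp [Finset.card_univ]
  simp only [hinner, Finset.sum_const, Finset.card_univ, Fintype.card_fin, nsmul_eq_mul]
  rw [hc, hd]
  field_simp
  ring
end
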